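/- arXiv:0806.1275 — 3 statements merged into one kernel-verified Lean document; each statement's English description precedes it below -/
import Mathlib

section
/- Let r, a > 0, let D = {z ∈ ℂ : 0 < Im z < r}, and let u : D → [0, a) be a bounded subharmonic function such that u(z) → 0 as z → x within D, for every real boundary point x ∈ ℝ. Then u(z) ≤ (a/r)·Im z for every z ∈ D, and for every x ∈ ℝ one has limsup_{y→0⁺} u(x+iy)/y ≤ a/r. -/
set_option maxHeartbeats 1000000


open Metric Filter Complex Set
open MeasureTheory

/-- A function `u : ℂ → ℝ` is *subharmonic* on an open set `D ⊆ ℂ` if it is upper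
semicontinuous on `D` and satisfies the sub-mean-value inequality on every closed
disc contained in `D`. -/
def SubharmonicOn (u : ℂ → ℝ) (D : Set ℂ) : Prop :=
  UpperSemicontinuousOn u D ∧
    ∀ c : ℂ, ∀ r : ℝ, 0 < r → closedBall c r ⊆ D →
      u c ≤ (2 * Real.pi)⁻¹ * ∫ θ in (0:ℝ)..(2 * Real.pi), u (circleMap c r θ)


section auxiliary


lemma circle_avg_entire (f : ℂ → ℂ) (hf : Differentiable ℂ f) (c : ℂ) (s : ℝ) (hs : 0 < s) :
    ∫ θ in (0:ℝ)..(2 * Real.pi), f (circleMap c s θ) = (2 * Real.pi : ℝ) • f c := by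
  have h : (∮ z in C(c, s), (z - c)⁻¹ • f z) = (2 * Real.pi * I : ℂ) • f c :=
    DiffContOnCl.circleIntegral_sub_inv_smul
      (hf.diffContOnCl) (mem_ball_self hs)
  rw [circleIntegral] at h
  have key : ∀ θ : ℝ, deriv (circleMap c s) θ • (circleMap c s θ - c)⁻¹ • f (circleMap c s θ)
      = I * f (circleMap c s θ) := by
    intro θ
    rw [deriv_circleMap, circleMap_sub_center]
    have h0 : circleMap 0 s θ ≠ 0 := circleMap_ne_center hs.ne'
    field_simp [smul_eq_mul]
    rw [smul_eq_mul, smul_eq_mul, one_div, mul_comm (circleMap 0 s θ) I, mul_assoc,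
      ← mul_assoc (circleMap 0 s θ), mul_inv_cancel₀ h0, one_mul]
  simp only [key] at h
  rw [intervalIntegral.integral_const_mul] at h
  have hI : (I : ℂ) ≠ 0 := I_ne_zero
  have := congrArg (fun w => I⁻¹ * w) h
  rw [← mul_assoc, inv_mul_cancel₀ hI, one_mul] at this
  rw [this, Complex.real_smul, smul_eq_mul]
  field_simp
  ring_nf
  push_cast
  ring

lemma re_circle_avg (f : ℂ → ℂ) (hf : Differentiable ℂ f) (c : ℂ) (s : ℝ) (hs : 0 < s) :
    ∫ θ in (0:ℝ)..(2 * Real.pi), (f (circleMap c s θ)).re = 2 * Real.pi * (f c).re := by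
  have hi : IntervalIntegrable (fun θ => f (circleMap c s θ)) MeasureTheory.volume 0 (2*Real.pi) :=
    (hf.continuous.comp (continuous_circleMap c s)).intervalIntegrable _ _
  have := Complex.reCLM.intervalIntegral_comp_comm hi
  simp only [Complex.reCLM_apply] at this
  rw [this, circle_avg_entire f hf c s hs]
  simp [Complex.smul_re]



lemma maxPrinciple (Ω : Set ℂ) (hΩo : IsOpen Ω) (hpre : IsPreconnected Ω)
    (hbd : Bornology.IsBounded Ω)
    (w : ℂ → ℝ) (husc : UpperSemicontinuousOn w Ω)
    (hsub : ∀ c ρ, 0 < ρ → closedBall c ρ ⊆ Ω →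
      w c ≤ (2 * Real.pi)⁻¹ * ∫ θ in (0:ℝ)..(2 * Real.pi), w (circleMap c ρ θ))
    (hbound : ∀ ζ ∈ closure Ω \ Ω, ∀ ε > 0, ∀ᶠ z in nhdsWithin ζ Ω, w z ≤ ε)
    (hne : (closure Ω \ Ω).Nonempty) :
    ∀ z ∈ Ω, w z ≤ 0 := by
  intro z₀ hz₀
  by_contra hpos
  push_neg at hpos
  have hK : IsCompact (closure Ω) := hbd.isCompact_closure
  -- w is bounded above on Ω
  have hP : ∀ ζ ∈ closure Ω, ∃ t : Set ℂ, ∃ b : ℝ,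
      IsOpen t ∧ ζ ∈ t ∧ ∀ z ∈ t ∩ Ω, w z ≤ b := by
    intro ζ hζ
    by_cases hζΩ : ζ ∈ Ω
    · have ev : ∀ᶠ z in nhdsWithin ζ Ω, w z < w ζ + 1 := husc ζ hζΩ (w ζ + 1) (lt_add_one _)
      rcases mem_nhdsWithin.mp ev with ⟨t, hto, htζ, hts⟩
      refine ⟨t, w ζ + 1, hto, htζ, fun z hz => ?_⟩
      have : w z < w ζ + 1 := hts ⟨hz.1, hz.2⟩
      exact this.le
    · have ev : ∀ᶠ z in nhdsWithin ζ Ω, w z ≤ 1 := hbound ζ ⟨hζ, hζΩ⟩ 1 one_pos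
      rcases mem_nhdsWithin.mp ev with ⟨t, hto, htζ, hts⟩
      refine ⟨t, 1, hto, htζ, fun z hz => ?_⟩
      exact hts ⟨hz.1, hz.2⟩
  choose! t b hto htm hb using hP
  have hcov : closure Ω ⊆ ⋃ ζ ∈ closure Ω, t ζ := fun z hz =>
    mem_biUnion hz (htm z hz)
  obtain ⟨F, hFsub, hFfin, hFcov⟩ :=
    hK.elim_finite_subcover_image (fun ζ hζ => hto ζ hζ) hcov
  have hbdd : BddAbove (w '' Ω) := by
    refine ⟨sSup (b '' F), ?_⟩
    rintro _ ⟨z, hz, rfl⟩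
    have hz' : z ∈ ⋃ ζ ∈ F, t ζ := hFcov (subset_closure hz)
    rcases mem_iUnion₂.mp hz' with ⟨ζ, hζF, hzt⟩
    calc w z ≤ b ζ := hb ζ (hFsub hζF) z ⟨hzt, hz⟩
      _ ≤ sSup (b '' F) := le_csSup (hFfin.image b).bddAbove ⟨ζ, hζF, rfl⟩
  set S := sSup (w '' Ω) with hS
  have hwleS : ∀ z ∈ Ω, w z ≤ S := fun z hz => le_csSup hbdd ⟨z, hz, rfl⟩
  have hSpos : 0 < S := lt_of_lt_of_le hpos (hwleS z₀ hz₀)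
  -- nested compacts
  set A : ℕ → Set ℂ := fun n => {z | z ∈ Ω ∧ S - 1 / (n + 1) ≤ w z} with hA
  have hAne : ∀ n, (A n).Nonempty := by
    intro n
    have h1 : S - 1 / ((n : ℝ) + 1) < S := by
      have : (0:ℝ) < 1 / ((n:ℝ) + 1) := by positivity
      linarith
    obtain ⟨x, ⟨z, hz, rfl⟩, hx⟩ :=
      exists_lt_of_lt_csSup (s := w '' Ω) ⟨w z₀, ⟨z₀, hz₀, rfl⟩⟩ h1
    exact ⟨z, hz, hx.le⟩
  have hKcomp : ∀ n, IsCompact (closure (A n)) := fun n =>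
    hK.of_isClosed_subset isClosed_closure (closure_mono fun z hz => hz.1)
  have hAmono : ∀ n, closure (A (n + 1)) ⊆ closure (A n) := by
    intro n
    apply closure_mono
    intro z hz
    refine ⟨hz.1, le_trans ?_ hz.2⟩
    have h2 : (1:ℝ) / ((n:ℝ) + 1 + 1) ≤ 1 / ((n:ℝ) + 1) := by
      apply one_div_le_one_div_of_le <;> push_cast <;> linarith
    push_cast
    linarith
  obtain ⟨ζ, hζ⟩ := IsCompact.nonempty_iInter_of_sequence_nonempty_isCompact_isClosed
    (fun n => closure (A n)) hAmono (fun n => (hAne n).closure) (hKcomp 0)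
    (fun n => isClosed_closure)
  have hζmem : ∀ n, ζ ∈ closure (A n) := fun n => mem_iInter.mp hζ n
  have hζcl : ζ ∈ closure Ω :=
    closure_mono (fun z (hz : z ∈ A 0) => hz.1) (hζmem 0)
  have hmeet : ∀ (n : ℕ) (s : Set ℂ), s ∈ nhds ζ → ∃ z ∈ Ω, z ∈ s ∧ S - 1/((n:ℝ)+1) ≤ w z := by
    intro n s hs
    rcases mem_closure_iff_nhds.mp (hζmem n) s hs with ⟨z, hzs, hzA⟩
    exact ⟨z, hzA.1, hzs, hzA.2⟩
  have hζΩ : ζ ∈ Ω := by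
    by_contra hζΩ
    have hSle : S ≤ S/2 := by
      have hev := hbound ζ ⟨hζcl, hζΩ⟩ (S/2) (half_pos hSpos)
      rcases mem_nhdsWithin.mp hev with ⟨u, huo, huζ, hus⟩
      have key : ∀ n : ℕ, S - S/2 ≤ 1/((n:ℝ)+1) := by
        intro n
        obtain ⟨z, hzΩ, hzu, hzw⟩ := hmeet n u (huo.mem_nhds huζ)
        have h3 : w z ≤ S/2 := hus ⟨hzu, hzΩ⟩
        linarith
      have h4 : S - S/2 ≤ 0 := ge_of_tendsto tendsto_one_div_add_atTop_nhds_zero_nat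
        (Eventually.of_forall key)
      linarith
    linarith
  have hζS : w ζ = S := by
    refine le_antisymm (hwleS ζ hζΩ) ?_
    by_contra hlt
    push_neg at hlt
    set c := (w ζ + S) / 2 with hc
    have hc1 : w ζ < c := by rw [hc]; linarith
    have hc2 : c < S := by rw [hc]; linarith
    have ev : ∀ᶠ z in nhdsWithin ζ Ω, w z < c := husc ζ hζΩ c hc1
    rcases mem_nhdsWithin.mp ev with ⟨u, huo, huζ, hus⟩
    obtain ⟨n, hn⟩ := exists_nat_one_div_lt (ε := S - c) (by linarith)
    obtain ⟨z, hzΩ, hzu, hzw⟩ := hmeet n u (huo.mem_nhds huζ)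
    have h5 : w z < c := hus ⟨hzu, hzΩ⟩
    linarith
  -- the set where w = S
  set AS : Set ℂ := {z | z ∈ Ω ∧ w z = S} with hASdef
  have hASopen : IsOpen AS := by
    rw [Metric.isOpen_iff]
    intro c hc
    obtain ⟨ε, hε, hball⟩ := Metric.isOpen_iff.mp hΩo c hc.1
    refine ⟨ε/2, by positivity, ?_⟩
    have hρsub : closedBall c (ε/2) ⊆ Ω := (closedBall_subset_ball (by linarith)).trans hball
    intro p hp
    by_cases hpc : p = c
    · rw [hpc]; exact hc
    have hpΩ : p ∈ Ω := hρsub (ball_subset_closedBall hp)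
    refine ⟨hpΩ, ?_⟩
    set s := dist p c with hsdef
    have hs0 : 0 < s := dist_pos.mpr hpc
    have hballs : closedBall c s ⊆ Ω :=
      (closedBall_subset_closedBall (le_of_lt (mem_ball.mp hp))).trans hρsub
    have hsubm := hsub c s hs0 hballs
    rw [hc.2] at hsubm
    have hcirc : ∀ θ : ℝ, circleMap c s θ ∈ Ω := fun θ =>
      hballs (sphere_subset_closedBall (circleMap_mem_sphere c hs0.le θ))
    by_cases hint : IntervalIntegrable (fun θ => w (circleMap c s θ)) volume 0 (2*Real.pi)
    · -- integral of S - w over the circle vanishes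
      have hSint : (∫ θ in (0:ℝ)..(2*Real.pi), (S - w (circleMap c s θ))) ≤ 0 := by
        rw [intervalIntegral.integral_sub (intervalIntegrable_const) hint,
          intervalIntegral.integral_const]
        have h2π : (0:ℝ) < 2 * Real.pi := Real.two_pi_pos
        have h6 : 2 * Real.pi * S ≤ ∫ θ in (0:ℝ)..(2*Real.pi), w (circleMap c s θ) := by
          rw [inv_mul_eq_div, le_div_iff₀ h2π] at hsubm
          linarith
        simp only [smul_eq_mul, sub_zero]
        linarith
      have hint' : IntegrableOn (fun θ => S - w (circleMap c s θ)) (Ioc 0 (2*Real.pi)) volume := by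
        have h7 := (intervalIntegrable_const (c := S)).sub hint
        rw [intervalIntegrable_iff] at h7
        rwa [uIoc_of_le Real.two_pi_pos.le] at h7
      have hnonneg : ∀ θ : ℝ, 0 ≤ S - w (circleMap c s θ) := fun θ =>
        sub_nonneg.mpr (hwleS _ (hcirc θ))
      have hzero : (∫ θ in Ioc (0:ℝ) (2*Real.pi), (S - w (circleMap c s θ))) = 0 := by
        have h1 : (∫ θ in Ioc (0:ℝ) (2*Real.pi), (S - w (circleMap c s θ))) ≤ 0 := by
          rwa [intervalIntegral.integral_of_le Real.two_pi_pos.le] at hSint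
        have h2 : 0 ≤ (∫ θ in Ioc (0:ℝ) (2*Real.pi), (S - w (circleMap c s θ))) :=
          setIntegral_nonneg measurableSet_Ioc (fun θ _ => hnonneg θ)
        linarith
      have hae := (integral_eq_zero_iff_of_nonneg (fun θ => hnonneg θ) hint').mp hzero
      have hae2 : ∀ᵐ θ ∂(volume.restrict (Ioc (0:ℝ) (2*Real.pi))),
          S - w (circleMap c s θ) = 0 := by
        filter_upwards [hae] with θ h using by simpa using h
      rw [ae_restrict_iff' measurableSet_Ioc] at hae2
      -- now derive w p = S
      by_contra hplt'
      have hplt : w p < S := lt_of_le_of_ne (hwleS p hpΩ) hplt'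
      have ev : ∀ᶠ z in nhdsWithin p Ω, w z < S := husc p hpΩ S hplt
      rcases mem_nhdsWithin.mp ev with ⟨u, huo, hup, hus⟩
      -- find θ₁ ∈ [0, 2π) with circleMap c s θ₁ = p
      have hrange : p ∈ Set.range (circleMap c s) := by
        rw [range_circleMap, abs_of_pos hs0]
        exact Metric.mem_sphere.mpr hsdef.symm
      obtain ⟨θ₀, hθ₀⟩ := hrange
      set θ₁ : ℝ := θ₀ - ⌊θ₀ / (2 * Real.pi)⌋ * (2 * Real.pi) with hθ₁def
      have hθ₁eq : circleMap c s θ₁ = p := by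
        rw [hθ₁def, (periodic_circleMap c s).sub_int_mul_eq]
        exact hθ₀
      have hθ₁0 : 0 ≤ θ₁ := Int.sub_floor_div_mul_nonneg θ₀ Real.two_pi_pos
      have hθ₁2π : θ₁ < 2 * Real.pi := Int.sub_floor_div_mul_lt θ₀ Real.two_pi_pos
      have hvopen : IsOpen ((circleMap c s) ⁻¹' u) := huo.preimage (continuous_circleMap c s)
      have hθ₁v : θ₁ ∈ (circleMap c s) ⁻¹' u := by
        rw [Set.mem_preimage, hθ₁eq]; exact hup
      obtain ⟨δ, hδ, hδball⟩ := Metric.isOpen_iff.mp hvopen θ₁ hθ₁v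
      set m := min (θ₁ + δ) (2 * Real.pi) with hm
      have hθ₁m : θ₁ < m := lt_min (by linarith) hθ₁2π
      have hJIoc : Ioo θ₁ m ⊆ Ioc 0 (2*Real.pi) := fun x hx =>
        ⟨lt_of_le_of_lt hθ₁0 hx.1, le_trans hx.2.le (min_le_right _ _)⟩
      have hJball : Ioo θ₁ m ⊆ Metric.ball θ₁ δ := by
        intro x hx
        rw [Real.ball_eq_Ioo]
        exact ⟨by linarith [hx.1], lt_of_lt_of_le hx.2 (min_le_left _ _)⟩
      by_cases hall : ∀ x ∈ Ioo θ₁ m, w (circleMap c s x) ≠ S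
      · have hsubnull : Ioo θ₁ m ⊆
            {θ : ℝ | ¬ (θ ∈ Ioc (0:ℝ) (2*Real.pi) → S - w (circleMap c s θ) = 0)} := by
          intro x hx
          intro himp
          have h8 := himp (hJIoc hx)
          have h9 : w (circleMap c s x) = S := by linarith
          exact hall x hx h9
        have hnull : volume {θ : ℝ | ¬ (θ ∈ Ioc (0:ℝ) (2*Real.pi) →
            S - w (circleMap c s θ) = 0)} = 0 := ae_iff.mp hae2
        have h10 : volume (Ioo θ₁ m) = 0 := measure_mono_null hsubnull hnull
        rw [Real.volume_Ioo] at h10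
        have h11 : (0:ℝ) < m - θ₁ := by linarith
        simp [ENNReal.ofReal_eq_zero] at h10
        linarith
      · push_neg at hall
        obtain ⟨x, hx, hxS⟩ := hall
        have hzu : circleMap c s x ∈ u := hδball (hJball hx)
        have h12 : w (circleMap c s x) < S := hus ⟨hzu, hcirc x⟩
        rw [hxS] at h12
        exact lt_irrefl _ h12
    · exfalso
      rw [intervalIntegral.integral_undef hint] at hsubm
      rw [mul_zero] at hsubm
      linarith
  -- clopen argument
  set V : Set ℂ := {z | ∃ ts : Set ℂ, IsOpen ts ∧ z ∈ ts ∧ ∀ y ∈ ts ∩ Ω, w y < S} with hV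
  have hVopen : IsOpen V := by
    apply isOpen_iff_forall_mem_open.mpr
    rintro z ⟨ts, hts, hzt, hlt⟩
    exact ⟨ts, fun y hy => ⟨ts, hts, hy, hlt⟩, hts, hzt⟩
  have hdisj : Disjoint AS V := by
    rw [Set.disjoint_left]
    rintro z hzAS ⟨ts, hts, hzt, hlt⟩
    exact absurd hzAS.2 (ne_of_lt (hlt z ⟨hzt, hzAS.1⟩))
  have hcover : Ω ⊆ AS ∪ V := by
    intro z hz
    rcases eq_or_lt_of_le (hwleS z hz) with h | h
    · exact Or.inl ⟨hz, h⟩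
    · have ev := husc z hz S h
      rcases mem_nhdsWithin.mp ev with ⟨ts, hts, hzt, hsub'⟩
      exact Or.inr ⟨ts, hts, hzt, fun y hy => hsub' ⟨hy.1, hy.2⟩⟩
  have hΩAS : Ω ⊆ AS :=
    hpre.subset_left_of_subset_union hASopen hVopen hdisj hcover ⟨ζ, hζΩ, hζΩ, hζS⟩
  obtain ⟨ζ₀, hζ₀⟩ := hne
  have hev := hbound ζ₀ hζ₀ (S/2) (half_pos hSpos)
  have hnb : (nhdsWithin ζ₀ Ω).NeBot := mem_closure_iff_nhdsWithin_neBot.mp hζ₀.1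
  obtain ⟨z, hzw, hzΩ⟩ := (hev.and eventually_mem_nhdsWithin).exists
  have h13 : w z = S := (hΩAS hzΩ).2
  linarith

end auxiliary

/-- **Schwarz lemma for the strip** (Theorem 2.2, first part).  Let `r, a > 0`,
`D = {0 < Im z < r}` and `u : D → [0, a)` a bounded subharmonic function tending to `0`
at every real boundary point.  Then `u z ≤ (a/r) · Im z` on `D` and
`limsup_{y → 0⁺} u (x + iy) / y ≤ a / r` for every real `x`. -/
theorem subharmonic_strip_schwarz (r a : ℝ) (hr : 0 < r) (ha : 0 < a)
    (D : Set ℂ) (hD : D = {z : ℂ | 0 < z.im ∧ z.im < r})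
    (u : ℂ → ℝ) (hu : SubharmonicOn u D)
    (hbound : ∀ z ∈ D, 0 ≤ u z ∧ u z < a)
    (hboundary : ∀ x : ℝ, Tendsto u (nhdsWithin (x : ℂ) D) (nhds 0)) :
    (∀ z ∈ D, u z ≤ a / r * z.im) ∧
      ∀ x : ℝ, limsup (fun y : ℝ => u ((x : ℂ) + y * Complex.I) / y)
        (nhdsWithin 0 (Set.Ioi 0)) ≤ a / r := by
  obtain ⟨husc, hmean⟩ := hu
  set lam : ℝ := Real.pi / (2 * r) with hlamdef
  have hπ := Real.pi_pos
  have hlam : 0 < lam := by rw [hlamdef]; positivity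
  have hlamr : lam * r = Real.pi / 2 := by rw [hlamdef]; field_simp
  -- the chord inequality
  have hchord : ∀ t : ℝ, 0 ≤ t → t ≤ r → a ≤ a / r * t + a * Real.cos (lam * t) := by
    intro t ht0 htr
    have hlt : lam * t ≤ Real.pi / 2 := by
      rw [← hlamr]; exact mul_le_mul_of_nonneg_left htr hlam.le
    have hx0 : 0 ≤ Real.pi / 2 - lam * t := by linarith
    have hx2 : Real.pi / 2 - lam * t ≤ Real.pi / 2 := by nlinarith [mul_nonneg hlam.le ht0]
    have hsin := Real.mul_le_sin hx0 hx2
    rw [Real.sin_pi_div_two_sub] at hsin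
    have hsimp : 2 / Real.pi * (Real.pi / 2 - lam * t) = 1 - t / r := by
      rw [hlamdef]; field_simp
    rw [hsimp] at hsin
    have h1 : a * (1 - t / r) ≤ a * Real.cos (lam * t) :=
      mul_le_mul_of_nonneg_left hsin ha.le
    have h2 : a * (1 - t / r) = a - a / r * t := by field_simp
    linarith
  -- Part 1
  have key : ∀ z ∈ D, u z ≤ a / r * z.im := by
    intro z hz
    have hzim : 0 < z.im ∧ z.im < r := by rwa [hD, mem_setOf_eq] at hz
    -- bound for each T
    have bound : ∀ T : ℝ, |z.re| < T → u z ≤ a / r * z.im +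
        (Real.exp (lam * (z.re - T)) + Real.exp (-(lam * (z.re + T)))) *
          (a * Real.cos (lam * z.im)) := by
      intro T hT
      have hT0 : 0 < T := lt_of_le_of_lt (abs_nonneg _) hT
      set F : ℂ → ℂ := fun w => (-((a/r : ℝ) : ℂ) * I) * w + (a:ℂ) * Complex.exp ((lam:ℂ) * (w - (T:ℂ)))
        + (a:ℂ) * Complex.exp (-(lam:ℂ) * (w + (T:ℂ))) with hFdef
      have hFdiff : Differentiable ℂ F := by
        rw [hFdef]; fun_prop
      set h : ℂ → ℝ := fun w => (F w).re with hhdef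
      have hcont : Continuous h := Complex.continuous_re.comp hFdiff.continuous
      have hFre : ∀ w : ℂ, h w = a / r * w.im
          + a * Real.exp (lam * (w.re - T)) * Real.cos (lam * w.im)
          + a * Real.exp (-(lam * (w.re + T))) * Real.cos (lam * w.im) := by
        intro w
        simp only [hhdef, hFdef, Complex.add_re, Complex.mul_re, Complex.mul_im,
          Complex.neg_re, Complex.neg_im, Complex.I_re, Complex.I_im, Complex.ofReal_re,
          Complex.ofReal_im, Complex.exp_re, Complex.exp_im, Complex.sub_re, Complex.sub_im,
          Complex.add_im]
        ring_nf
        rw [Real.cos_neg]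
        ring
      have hh0 : ∀ w : ℂ, 0 ≤ w.im → w.im ≤ r → 0 ≤ h w := by
        intro w h0 h1
        have hcos : 0 ≤ Real.cos (lam * w.im) := by
          apply Real.cos_nonneg_of_mem_Icc
          constructor
          · have : 0 ≤ lam * w.im := mul_nonneg hlam.le h0
            linarith
          · rw [← hlamr]; exact mul_le_mul_of_nonneg_left h1 hlam.le
        rw [hFre]
        have e1 : (0:ℝ) < Real.exp (lam * (w.re - T)) := Real.exp_pos _
        have e2 : (0:ℝ) < Real.exp (-(lam * (w.re + T))) := Real.exp_pos _
        have : 0 ≤ a / r * w.im := by positivity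
        nlinarith [mul_nonneg ha.le hcos]
      -- the domain
      set Ω : Set ℂ := Ioo (-T) T ×ℂ Ioo 0 r with hΩdef
      have hΩD : Ω ⊆ D := by
        intro w hw
        rw [hD, mem_setOf_eq]
        exact Set.mem_Ioo.mp (mem_reProdIm.mp hw).2
      have hzΩ : z ∈ Ω := mem_reProdIm.mpr
        ⟨Set.mem_Ioo.mpr (abs_lt.mp hT), Set.mem_Ioo.mpr hzim⟩
      have himD : ∀ y ∈ Ω, 0 < y.im ∧ y.im < r := fun y hy => by
        have := hΩD hy; rwa [hD, mem_setOf_eq] at this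
      have hclos : closure Ω = Icc (-T) T ×ℂ Icc 0 r := by
        rw [hΩdef, closure_reProdIm, closure_Ioo (by linarith : (-T) ≠ T),
          closure_Ioo hr.ne]
      have hΩo : IsOpen Ω := isOpen_Ioo.reProdIm isOpen_Ioo
      have hpre : IsPreconnected Ω := by
        apply Convex.isPreconnected
        exact ((convex_Ioo (-T) T).linear_preimage Complex.reLm).inter
          ((convex_Ioo 0 r).linear_preimage Complex.imLm)
      have hbd : Bornology.IsBounded Ω :=
        (Metric.isBounded_Ioo _ _).reProdIm (Metric.isBounded_Ioo _ _)
      -- the comparison function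
      set w : ℂ → ℝ := fun y => u y + -(h y) with hwdef
      have husc' : UpperSemicontinuousOn w Ω :=
        (husc.mono hΩD).add (hcont.neg.continuousOn.upperSemicontinuousOn)
      have hsubw : ∀ c ρ, 0 < ρ → closedBall c ρ ⊆ Ω →
          w c ≤ (2 * Real.pi)⁻¹ * ∫ θ in (0:ℝ)..(2 * Real.pi), w (circleMap c ρ θ) := by
        intro c ρ hρ hball
        have hDball : closedBall c ρ ⊆ D := hball.trans hΩD
        have hmean' := hmean c ρ hρ hDball
        have hhint : IntervalIntegrable (fun θ => h (circleMap c ρ θ)) volume 0 (2*Real.pi) :=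
          (hcont.comp (continuous_circleMap _ _)).intervalIntegrable _ _
        have hhavg : (∫ θ in (0:ℝ)..(2*Real.pi), h (circleMap c ρ θ)) = 2*Real.pi * h c :=
          re_circle_avg F hFdiff c ρ hρ
        have hπinv : (2*Real.pi)⁻¹ * (2*Real.pi) = 1 := by
          field_simp
        by_cases hint : IntervalIntegrable (fun θ => u (circleMap c ρ θ)) volume 0 (2*Real.pi)
        · have hsplit : (∫ θ in (0:ℝ)..(2*Real.pi), w (circleMap c ρ θ)) =
              (∫ θ in (0:ℝ)..(2*Real.pi), u (circleMap c ρ θ)) - 2*Real.pi * h c := by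
            have hgneg : IntervalIntegrable (fun θ => -(h (circleMap c ρ θ)))
                volume 0 (2*Real.pi) := hhint.neg
            simp only [hwdef]
            rw [intervalIntegral.integral_add hint hgneg,
              intervalIntegral.integral_neg, hhavg]
            ring
          rw [hsplit]
          simp only [hwdef]
          rw [mul_sub]
          have : (2*Real.pi)⁻¹ * (2*Real.pi * h c) = h c := by
            rw [← mul_assoc, hπinv, one_mul]
          rw [this]
          linarith
        · have hwnint : ¬ IntervalIntegrable (fun θ => w (circleMap c ρ θ)) volume
              0 (2*Real.pi) := by
            intro hcon
            apply hint
            have h2 := hcon.add hhint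
            have h3 : (fun θ => w (circleMap c ρ θ) + h (circleMap c ρ θ)) =
                (fun θ => u (circleMap c ρ θ)) := by
              funext θ; rw [hwdef]; ring
            rwa [h3] at h2
          rw [intervalIntegral.integral_undef hwnint, mul_zero]
          have hu0 : u c ≤ 0 := by
            rw [intervalIntegral.integral_undef hint, mul_zero] at hmean'
            exact hmean'
          have hcD : c ∈ Ω := hball (mem_closedBall_self hρ.le)
          have hc0 : 0 ≤ h c := hh0 c (himD c hcD).1.le (himD c hcD).2.le
          simp only [hwdef]; linarith
      -- boundary behaviour
      have hbdry : ∀ ζ ∈ closure Ω \ Ω, ∀ ε > 0, ∀ᶠ y in nhdsWithin ζ Ω, w y ≤ ε := by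
        rintro ζ ⟨hζcl, hζΩ⟩ ε hε
        have hζc : (-T ≤ ζ.re ∧ ζ.re ≤ T) ∧ (0 ≤ ζ.im ∧ ζ.im ≤ r) := by
          rw [hclos] at hζcl
          have h9 := mem_reProdIm.mp hζcl
          exact ⟨Set.mem_Icc.mp h9.1, Set.mem_Icc.mp h9.2⟩
        by_cases him0 : ζ.im = 0
        · -- real boundary point
          have hζeq : ζ = ((ζ.re : ℝ) : ℂ) := Complex.ext (by simp) (by simp [him0])
          have htend : Tendsto u (nhdsWithin ζ D) (nhds 0) := by
            rw [hζeq]; exact hboundary ζ.re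
          have htend' : Tendsto u (nhdsWithin ζ Ω) (nhds 0) :=
            htend.mono_left (nhdsWithin_mono ζ hΩD)
          have ev1 : ∀ᶠ y in nhdsWithin ζ Ω, u y < ε := htend' (Iio_mem_nhds hε)
          filter_upwards [ev1, eventually_mem_nhdsWithin] with y hy1 hy2
          have h0 : 0 ≤ h y := hh0 y (himD y hy2).1.le (himD y hy2).2.le
          simp only [hwdef]; linarith
        · -- other boundary points: h ≥ a there
          have him : 0 < ζ.im := lt_of_le_of_ne hζc.2.1 (Ne.symm him0)
          have hha : a ≤ h ζ := by
            have hcosζ : 0 ≤ Real.cos (lam * ζ.im) := by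
              apply Real.cos_nonneg_of_mem_Icc
              refine ⟨by nlinarith [mul_nonneg hlam.le him.le], ?_⟩
              rw [← hlamr]; exact mul_le_mul_of_nonneg_left hζc.2.2 hlam.le
            have e1 : (0:ℝ) < Real.exp (lam * (ζ.re - T)) := Real.exp_pos _
            have e2 : (0:ℝ) < Real.exp (-(lam * (ζ.re + T))) := Real.exp_pos _
            have him' : 0 ≤ a / r * ζ.im := by positivity
            by_cases himr : ζ.im = r
            · rw [hFre, himr, hlamr, Real.cos_pi_div_two]
              have : a / r * r = a := by field_simp
              nlinarith
            · have himlt : ζ.im < r := lt_of_le_of_ne hζc.2.2 himr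
              have hre : ζ.re = T ∨ ζ.re = -T := by
                by_contra hcon
                push_neg at hcon
                apply hζΩ
                refine mem_reProdIm.mpr ⟨Set.mem_Ioo.mpr ⟨?_, ?_⟩, Set.mem_Ioo.mpr ⟨him, himlt⟩⟩
                · exact lt_of_le_of_ne hζc.1.1 (Ne.symm hcon.2)
                · exact lt_of_le_of_ne hζc.1.2 hcon.1
              have hch := hchord ζ.im him.le himlt.le
              rcases hre with hre | hre
              · rw [hFre, hre, sub_self, mul_zero, Real.exp_zero, mul_one]
                nlinarith [hch, mul_nonneg (mul_nonneg ha.le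
                  (Real.exp_pos (-(lam * (T + T)))).le) hcosζ]
              · rw [hFre, hre, neg_add_cancel, mul_zero, neg_zero, Real.exp_zero, mul_one]
                nlinarith [hch, mul_nonneg (mul_nonneg ha.le
                  (Real.exp_pos (lam * (-T - T))).le) hcosζ]
          have hcont2 : Tendsto (fun y => a - h y) (nhds ζ) (nhds (a - h ζ)) :=
            (continuous_const.sub hcont).tendsto ζ
          have ev : ∀ᶠ y in nhds ζ, a - h y < ε :=
            hcont2 (Iio_mem_nhds (lt_of_le_of_lt (by linarith) hε))
          filter_upwards [eventually_nhdsWithin_of_eventually_nhds ev,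
            eventually_mem_nhdsWithin] with y hy1 hy2
          have hua : u y < a := (hbound y (hΩD hy2)).2
          simp only [hwdef]; linarith
      -- the boundary is nonempty
      have hne : (closure Ω \ Ω).Nonempty := by
        refine ⟨(z.re : ℂ), ?_, ?_⟩
        · rw [hclos]
          refine mem_reProdIm.mpr ⟨?_, ?_⟩
          · simp only [Complex.ofReal_re]
            exact ⟨(abs_lt.mp hT).1.le, (abs_lt.mp hT).2.le⟩
          · simp only [Complex.ofReal_im]
            exact ⟨le_refl 0, hr.le⟩
        · intro hmem
          have := (mem_reProdIm.mp hmem).2.1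
          simp only [Complex.ofReal_im] at this
          exact lt_irrefl 0 this
      have := maxPrinciple Ω hΩo hpre hbd w husc' hsubw hbdry hne z hzΩ
      simp only [hwdef] at this
      have huh : u z ≤ h z := by linarith
      rw [hFre] at huh
      calc u z ≤ a / r * z.im + a * Real.exp (lam * (z.re - T)) * Real.cos (lam * z.im)
          + a * Real.exp (-(lam * (z.re + T))) * Real.cos (lam * z.im) := huh
        _ = a / r * z.im + (Real.exp (lam * (z.re - T)) + Real.exp (-(lam * (z.re + T)))) *
            (a * Real.cos (lam * z.im)) := by ring
    -- let T → ∞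
    have l1 : Tendsto (fun T : ℝ => lam * (z.re - T)) atTop atBot := by
      apply tendsto_atBot.mpr
      intro b
      filter_upwards [eventually_ge_atTop (z.re - b / lam)] with T hT
      calc lam * (z.re - T) ≤ lam * (b / lam) := by
            apply mul_le_mul_of_nonneg_left _ hlam.le
            linarith
        _ = b := by field_simp; try ring
    have l2 : Tendsto (fun T : ℝ => -(lam * (z.re + T))) atTop atBot := by
      apply tendsto_atBot.mpr
      intro b
      filter_upwards [eventually_ge_atTop (-b / lam - z.re)] with T hT
      have : -b / lam ≤ z.re + T := by linarith
      have h5 : -b ≤ lam * (z.re + T) := by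
        calc -b = lam * (-b / lam) := by field_simp; try ring
          _ ≤ lam * (z.re + T) := mul_le_mul_of_nonneg_left this hlam.le
      linarith
    have htends : Tendsto (fun T : ℝ => a / r * z.im +
        (Real.exp (lam * (z.re - T)) + Real.exp (-(lam * (z.re + T)))) *
          (a * Real.cos (lam * z.im))) atTop (nhds (a / r * z.im)) := by
      have e1 : Tendsto (fun T : ℝ => Real.exp (lam * (z.re - T))) atTop (nhds 0) :=
        Real.tendsto_exp_atBot.comp l1
      have e2 : Tendsto (fun T : ℝ => Real.exp (-(lam * (z.re + T)))) atTop (nhds 0) :=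
        Real.tendsto_exp_atBot.comp l2
      have e3 := ((e1.add e2).mul_const (a * Real.cos (lam * z.im))).const_add (a / r * z.im)
      simpa using e3
    exact ge_of_tendsto htends (eventually_atTop.mpr
      ⟨|z.re| + 1, fun T hT => bound T (by linarith)⟩)
  refine ⟨key, ?_⟩
  -- Part 2
  intro x
  have hev : ∀ᶠ y : ℝ in nhdsWithin (0:ℝ) (Set.Ioi 0),
      u ((x : ℂ) + y * Complex.I) / y ≤ a / r := by
    filter_upwards [Ioo_mem_nhdsGT hr] with y hy
    have hyim : ((x : ℂ) + y * Complex.I).im = y := by simp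
    have hmem : ((x : ℂ) + y * Complex.I) ∈ D := by
      rw [hD, mem_setOf_eq, hyim]
      exact ⟨hy.1, hy.2⟩
    have hk := key _ hmem
    rw [hyim] at hk
    rw [div_le_iff₀ hy.1]
    linarith [hk]
  have hlow : ∀ᶠ y : ℝ in nhdsWithin (0:ℝ) (Set.Ioi 0),
      (0:ℝ) ≤ u ((x : ℂ) + y * Complex.I) / y := by
    filter_upwards [Ioo_mem_nhdsGT hr] with y hy
    have hyim : ((x : ℂ) + y * Complex.I).im = y := by simp
    have hmem : ((x : ℂ) + y * Complex.I) ∈ D := by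
      rw [hD, mem_setOf_eq, hyim]; exact ⟨hy.1, hy.2⟩
    exact div_nonneg (hbound _ hmem).1 hy.1.le
  have hcb : IsCoboundedUnder (· ≤ ·) (nhdsWithin (0:ℝ) (Set.Ioi 0))
      (fun y : ℝ => u ((x : ℂ) + y * Complex.I) / y) :=
    isCoboundedUnder_le_of_eventually_le _ hlow
  exact limsup_le_of_le hcb hev
end

section
/- Let M = {z ∈ ℂ : |Im z| < π/4}. Then the function u(z) = |Im z| belongs to U(ℝ,M) (it is subharmonic on M, takes values in [0, π/4), and vanishes on ℝ), and it is maximal: v(z) ≤ |Im z| for every v ∈ U(ℝ,M) and every z ∈ M. -/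
open Metric Filter Complex Set
open Topology

/-- The class `𝒰(ℝ, M)` for the analytic pair `(ℝ, M)`, `M` an open subset of `ℂ`
containing `ℝ`: subharmonic functions `u : M → [0, π/4)` vanishing on `ℝ`. -/
def MemPSHU (M : Set ℂ) (u : ℂ → ℝ) : Prop :=
  SubharmonicOn u M ∧ (∀ z ∈ M, 0 ≤ u z ∧ u z < Real.pi / 4) ∧
    ∀ x : ℝ, (x : ℂ) ∈ M → u (x : ℂ) = 0

lemma cosh_re' (z : ℂ) : (Complex.cosh z).re = Real.cosh z.re * Real.cos z.im := by
  have h : ∀ x y : ℝ, (Complex.cosh ((x:ℂ) + (y:ℂ) * I)).re = Real.cosh x * Real.cos y := by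
    intro x y
    rw [Complex.cosh_add, Complex.cosh_mul_I, Complex.sinh_mul_I]
    simp only [Complex.add_re, Complex.mul_re, Complex.mul_im, Complex.cosh_ofReal_re,
      Complex.cosh_ofReal_im, Complex.cos_ofReal_re, Complex.cos_ofReal_im,
      Complex.sinh_ofReal_re, Complex.sinh_ofReal_im, Complex.sin_ofReal_re,
      Complex.sin_ofReal_im, Complex.I_re, Complex.I_im]
    ring
  calc (Complex.cosh z).re = (Complex.cosh ((z.re:ℂ) + (z.im:ℂ) * I)).re := by
        rw [Complex.re_add_im]
  _ = Real.cosh z.re * Real.cos z.im := h z.re z.im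

lemma meanval (F : ℂ → ℂ) (hF : Differentiable ℂ F) (c : ℂ) (r : ℝ) (hr : 0 < r) :
    (∫ θ in (0:ℝ)..(2*Real.pi), (F (circleMap c r θ)).re) = 2 * Real.pi * (F c).re := by
  have h1 : (∮ z in C(c, r), (z - c)⁻¹ • F z) = (2 * Real.pi * I : ℂ) • F c :=
    (hF.differentiableOn).circleIntegral_sub_inv_smul (mem_ball_self hr)
  have h2 : (∮ z in C(c, r), (z - c)⁻¹ • F z)
      = ∫ θ in (0:ℝ)..(2*Real.pi), I • F (circleMap c r θ) := by
    rw [circleIntegral]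
    congr 1
    ext θ
    have hne : circleMap 0 r θ ≠ 0 := by
      simpa using (circleMap_ne_center (c := (0:ℂ)) hr.ne' (θ := θ))
    rw [deriv_circleMap, circleMap_sub_center, smul_smul]
    rw [smul_eq_mul, smul_eq_mul]
    field_simp
  have hcont : Continuous fun θ : ℝ => F (circleMap c r θ) :=
    hF.continuous.comp (continuous_circleMap c r)
  have h3 : (∫ θ in (0:ℝ)..(2*Real.pi), I • F (circleMap c r θ))
      = I • ∫ θ in (0:ℝ)..(2*Real.pi), F (circleMap c r θ) := by
    rw [intervalIntegral.integral_smul]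
  have h4 : (∫ θ in (0:ℝ)..(2*Real.pi), F (circleMap c r θ)) = (2 * Real.pi : ℂ) • F c := by
    have key := h1.symm.trans (h2.trans h3)
    have hI : (I : ℂ) ≠ 0 := I_ne_zero
    have h6 : (I : ℂ) • ((2 * Real.pi : ℂ) • F c) = I • ∫ θ in (0:ℝ)..(2*Real.pi), F (circleMap c r θ) := by
      rw [← key]; simp only [smul_smul, smul_eq_mul]; ring_nf
    have := smul_right_injective ℂ hI h6
    exact this.symm
  have h5 : (∫ θ in (0:ℝ)..(2*Real.pi), (F (circleMap c r θ)).re)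
      = (∫ θ in (0:ℝ)..(2*Real.pi), F (circleMap c r θ)).re := by
    have := Complex.reCLM.intervalIntegral_comp_comm (μ := MeasureTheory.volume) (hcont.intervalIntegrable (0:ℝ) (2*Real.pi))
    simpa using this
  rw [h5, h4]
  simp [smul_eq_mul]

lemma usc_max {f : ℂ → ℝ} {K : Set ℂ} (hK : IsCompact K) (hne : K.Nonempty)
    (hf : ∀ x ∈ K, UpperSemicontinuousAt f x) : ∃ x ∈ K, ∀ y ∈ K, f y ≤ f x := by
  by_contra hcon
  push_neg at hcon
  have hc : ∀ x : ℂ, ∃ y : ℂ, x ∈ K → y ∈ K ∧ f x < f y := by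
    intro x
    by_cases hx : x ∈ K
    · obtain ⟨y, hy, hlt⟩ := hcon x hx
      exact ⟨y, fun _ => ⟨hy, hlt⟩⟩
    · exact ⟨x, fun h => absurd h hx⟩
  choose g hg using hc
  have hUnhds : ∀ x ∈ K, {z | f z < f (g x)} ∈ 𝓝 x := fun x hx =>
    (hf x hx) (f (g x)) (hg x hx).2
  obtain ⟨t, htK, hcover⟩ := hK.elim_nhds_subcover (fun x => {z | f z < f (g x)}) hUnhds
  have htne : t.Nonempty := by
    obtain ⟨x, hx⟩ := hne
    obtain ⟨y, hy, -⟩ := mem_iUnion₂.1 (hcover hx)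
    exact ⟨y, hy⟩
  obtain ⟨x₀, hx₀t, hmax⟩ := t.exists_max_image (fun x => f (g x)) htne
  have hgx₀K : g x₀ ∈ K := (hg x₀ (htK x₀ hx₀t)).1
  obtain ⟨y, hyt, hylt⟩ := mem_iUnion₂.1 (hcover hgx₀K)
  exact absurd (hmax y hyt) (not_le.2 hylt)

lemma rect_bound (v : ℂ → ℝ)
    (husc : UpperSemicontinuousOn v {z : ℂ | |z.im| < Real.pi/4})
    (hsub : ∀ c : ℂ, ∀ r : ℝ, 0 < r → closedBall c r ⊆ {z : ℂ | |z.im| < Real.pi/4} →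
      v c ≤ (2 * Real.pi)⁻¹ * ∫ θ in (0:ℝ)..(2*Real.pi), v (circleMap c r θ))
    (hbd : ∀ z ∈ {z : ℂ | |z.im| < Real.pi/4}, 0 ≤ v z ∧ v z < Real.pi/4)
    (α ε a₁ a₂ A : ℝ)
    (ha₁ : -(Real.pi/4) < a₁) (ha₂ : a₂ < Real.pi/4)
    (hedge : ∀ p : ℂ, -A ≤ p.re → p.re ≤ A → a₁ ≤ p.im → p.im ≤ a₂ →
      ¬(-A < p.re ∧ p.re < A ∧ a₁ < p.im ∧ p.im < a₂) →
      v p < α * p.im + ε * (Complex.cosh p).re) :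
    ∀ z : ℂ, -A ≤ z.re → z.re ≤ A → a₁ ≤ z.im → z.im ≤ a₂ →
      v z < α * z.im + ε * (Complex.cosh z).re := by
  intro z hz1 hz2 hz3 hz4
  set M : Set ℂ := {z : ℂ | |z.im| < Real.pi/4} with hMdef
  have hMopen : IsOpen M :=
    isOpen_lt (continuous_abs.comp Complex.continuous_im) continuous_const
  set h : ℂ → ℝ := fun p => α * p.im + ε * (Complex.cosh p).re with hh
  have hhc : Continuous h :=
    (continuous_const.mul Complex.continuous_im).add
      (continuous_const.mul (Complex.continuous_re.comp Complex.continuous_cosh))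
  set F : ℂ → ℂ := fun z => -(α:ℂ) * I * z + (ε:ℂ) * Complex.cosh z with hFdef
  have hF : Differentiable ℂ F :=
    ((differentiable_const _).mul differentiable_id).add
      ((differentiable_const _).mul Complex.differentiable_cosh)
  have hFre : ∀ p : ℂ, (F p).re = h p := by
    intro p
    simp only [hFdef, hh, Complex.add_re, Complex.mul_re, Complex.mul_im, Complex.neg_re,
      Complex.neg_im, Complex.ofReal_re, Complex.ofReal_im, Complex.I_re, Complex.I_im]
    ring
  set w : ℂ → ℝ := fun p => v p - h p with hw
  set Q : Set ℂ := {p : ℂ | -A ≤ p.re} ∩ ({p : ℂ | p.re ≤ A} ∩ ({p : ℂ | a₁ ≤ p.im} ∩ {p : ℂ | p.im ≤ a₂})) with hQdef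
  have hQmem : ∀ p : ℂ, p ∈ Q ↔ (-A ≤ p.re ∧ p.re ≤ A ∧ a₁ ≤ p.im ∧ p.im ≤ a₂) := by
    intro p; simp [hQdef, mem_inter_iff, mem_setOf_eq]
  clear_value M h F w Q
  have hQM : Q ⊆ M := by
    intro p hp
    rw [hQmem] at hp
    simp only [hMdef, mem_setOf_eq, abs_lt]
    exact ⟨by linarith [hp.2.2.1], by linarith [hp.2.2.2]⟩
  have hQclosed : IsClosed Q := by
    rw [hQdef]
    exact (isClosed_le continuous_const Complex.continuous_re).inter
      ((isClosed_le Complex.continuous_re continuous_const).inter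
        ((isClosed_le continuous_const Complex.continuous_im).inter
          (isClosed_le Complex.continuous_im continuous_const)))
  have hQbdd : Bornology.IsBounded Q := by
    apply Bornology.IsBounded.subset (isBounded_closedBall (x := (0:ℂ)) (r := |A| + (|a₁| + |a₂|)))
    intro p hp
    rw [hQmem] at hp
    rw [mem_closedBall, dist_zero_right]
    have h1 : |p.re| ≤ |A| := abs_le.2 ⟨by linarith [neg_abs_le A, le_abs_self A, hp.1, hp.2.1],
      by linarith [neg_abs_le A, le_abs_self A, hp.1, hp.2.1]⟩
    have h2 : |p.im| ≤ |a₁| + |a₂| := abs_le.2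
      ⟨by linarith [neg_abs_le a₁, le_abs_self a₁, abs_nonneg a₂, hp.2.2.1],
      by linarith [le_abs_self a₂, neg_abs_le a₂, abs_nonneg a₁, hp.2.2.2]⟩
    calc ‖p‖ ≤ |p.re| + |p.im| := Complex.norm_le_abs_re_add_abs_im p
    _ ≤ |A| + (|a₁| + |a₂|) := add_le_add h1 h2
  have hQcpt : IsCompact Q := Metric.isCompact_of_isClosed_isBounded hQclosed hQbdd
  have hzQ : z ∈ Q := (hQmem z).2 ⟨hz1, hz2, hz3, hz4⟩
  have hQne : Q.Nonempty := ⟨z, hzQ⟩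
  have huscv : ∀ x ∈ M, UpperSemicontinuousAt v x := by
    intro x hx y hy
    have h1 := husc x hx y hy
    rwa [nhdsWithin_eq_nhds.2 (hMopen.mem_nhds hx)] at h1
  have huscw : ∀ x ∈ M, UpperSemicontinuousAt w x := by
    intro x hx
    have h2 : UpperSemicontinuousAt (fun p : ℂ => -h p) x :=
      (hhc.neg.continuousAt).upperSemicontinuousAt
    have h3 := (huscv x hx).add h2
    simpa [hw, sub_eq_add_neg] using h3
  obtain ⟨c, hcQ, hcmax⟩ := usc_max hQcpt hQne (fun x hx => huscw x (hQM hx))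
  -- it suffices to show the max of w on Q is negative
  suffices hwc : w c < 0 by
    have := hcmax z hzQ
    simp only [hw] at this hwc ⊢
    have hfin : v z - h z < 0 := lt_of_le_of_lt this hwc
    simpa [hh] using sub_neg.1 hfin
  by_contra hneg
  push_neg at hneg  -- 0 ≤ w c
  have hcQ' := (hQmem c).1 hcQ
  -- c must be in the open rectangle
  have hcint : -A < c.re ∧ c.re < A ∧ a₁ < c.im ∧ c.im < a₂ := by
    by_contra hcon
    have h5 := hedge c hcQ'.1 hcQ'.2.1 hcQ'.2.2.1 hcQ'.2.2.2 hcon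
    have h6 : w c < 0 := by
      simp only [hw]
      exact sub_neg.2 (by simpa [hh] using h5)
    exact absurd h6 (not_lt.2 hneg)
  set U : Set ℂ := {p : ℂ | -A < p.re ∧ p.re < A ∧ a₁ < p.im ∧ p.im < a₂} with hUdef
  clear_value U
  have hUopen : IsOpen U := by
    have h1 : U = {p : ℂ | -A < p.re} ∩ ({p : ℂ | p.re < A} ∩ ({p : ℂ | a₁ < p.im} ∩ {p : ℂ | p.im < a₂})) := by
      ext p; simp [hUdef, mem_inter_iff, mem_setOf_eq, and_assoc]
    rw [h1]
    exact (isOpen_lt continuous_const Complex.continuous_re).inter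
      ((isOpen_lt Complex.continuous_re continuous_const).inter
        ((isOpen_lt continuous_const Complex.continuous_im).inter
          (isOpen_lt Complex.continuous_im continuous_const)))
  have hUQ : U ⊆ Q := by
    intro p hp
    rw [hUdef, mem_setOf_eq] at hp
    rw [hQmem]
    exact ⟨hp.1.le, hp.2.1.le, hp.2.2.1.le, hp.2.2.2.le⟩
  have hcintQ : c ∈ interior Q :=
    interior_maximal hUQ hUopen (by rw [hUdef, mem_setOf_eq]; exact hcint)
  set r := infDist c Qᶜ with hrdef
  clear_value r
  have hQcne : Qᶜ.Nonempty := by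
    refine ⟨((|A| + 1 : ℝ) : ℂ), ?_⟩
    intro hmem
    rw [hQmem] at hmem
    have : (((|A| + 1 : ℝ) : ℂ)).re = |A| + 1 := Complex.ofReal_re _
    rw [this] at hmem
    linarith [le_abs_self A, hmem.2.1]
  have hr : 0 < r := by
    have hnot : c ∉ closure Qᶜ := by
      rw [closure_compl]
      simpa using hcintQ
    have hne0 : infDist c Qᶜ ≠ 0 := fun h0 => hnot ((mem_closure_iff_infDist_zero hQcne).2 h0)
    rw [hrdef]
    exact lt_of_le_of_ne infDist_nonneg (Ne.symm hne0)
  have hballQ : ball c r ⊆ Q := by rw [hrdef]; exact ball_infDist_compl_subset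
  have hcb : closedBall c r ⊆ Q := by
    rw [← closure_ball c hr.ne']
    exact closure_minimal hballQ hQclosed
  obtain ⟨p, hpcl, hpd⟩ := Metric.exists_mem_closure_infDist_eq_dist hQcne c
  have hpQ : p ∈ Q := hcb (by rw [mem_closedBall, dist_comm, hrdef]; exact hpd.ge)
  have hpU : p ∉ U := by
    intro hpu
    have h1 : p ∈ interior Q := interior_maximal hUQ hUopen hpu
    rw [closure_compl] at hpcl
    exact hpcl h1
  have hpQ' := (hQmem p).1 hpQ
  have hwp : w p < 0 := by
    have h5 := hedge p hpQ'.1 hpQ'.2.1 hpQ'.2.2.1 hpQ'.2.2.2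
      (by simpa [hUdef, mem_setOf_eq] using hpU)
    simp only [hw]
    exact sub_neg.2 (by simpa [hh] using h5)
  -- parametrize p on the circle
  obtain ⟨θ, hθ⟩ : ∃ θ : ℝ, circleMap c r θ = p := by
    have h1 : p ∈ sphere c |r| := by
      rw [mem_sphere, dist_comm, _root_.abs_of_pos hr, hrdef]
      exact hpd.symm
    rw [← range_circleMap] at h1
    exact h1
  set g : ℝ → ℝ := fun s => w (circleMap c r s) with hg
  clear_value g
  have hcircM : ∀ s : ℝ, circleMap c r s ∈ M := fun s =>
    hQM (hcb (circleMap_mem_closedBall c hr.le s))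
  have hgmax : ∀ s : ℝ, g s ≤ w c := fun s => by
    rw [hg]
    exact hcmax _ (hcb (circleMap_mem_closedBall c hr.le s))
  -- strict drop near θ
  have hev : ∀ᶠ s in 𝓝 θ, g s < w p / 2 := by
    have h1 : UpperSemicontinuousAt w p := huscw p (hQM hpQ)
    have h2 := h1 (w p / 2) (by linarith)
    have h3 : Tendsto (circleMap c r) (𝓝 θ) (𝓝 p) := by
      rw [← hθ]; exact (continuous_circleMap c r).continuousAt
    simpa only [hg] using h3.eventually h2
  obtain ⟨η, hη, hballev⟩ := Metric.eventually_nhds_iff_ball.1 hev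
  -- shift θ into [0, 2π)
  set k : ℤ := ⌊θ / (2*Real.pi)⌋ with hk
  set θ₀ : ℝ := θ - k * (2*Real.pi) with hθ₀
  clear_value k θ₀
  have h2pi : (0:ℝ) < 2*Real.pi := Real.two_pi_pos
  have hθ₀0 : 0 ≤ θ₀ := by rw [hθ₀, hk]; exact Int.sub_floor_div_mul_nonneg θ h2pi
  have hθ₀2 : θ₀ < 2*Real.pi := by rw [hθ₀, hk]; exact Int.sub_floor_div_mul_lt θ h2pi
  have hgshift : ∀ s ∈ ball θ₀ η, g s < w p / 2 := by
    intro s hs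
    have h1 : circleMap c r (s + k * (2*Real.pi)) = circleMap c r s :=
      (periodic_circleMap c r).int_mul k s
    have h2 : s + k * (2*Real.pi) ∈ ball θ η := by
      rw [mem_ball, Real.dist_eq] at hs ⊢
      have : s + k * (2*Real.pi) - θ = s - θ₀ := by rw [hθ₀]; ring
      rw [this]; exact hs
    have h5 := hballev _ h2
    simp only [hg] at h5 ⊢
    rwa [h1] at h5
  set δ : ℝ := min η (2*Real.pi - θ₀) with hδdef
  clear_value δ
  have hδ : 0 < δ := by rw [hδdef]; exact lt_min hη (by linarith)
  set τ₁ : ℝ := θ₀ + δ/3 with hτ₁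
  set τ₂ : ℝ := θ₀ + 2*δ/3 with hτ₂
  clear_value τ₁ τ₂
  have hord₁ : (0:ℝ) ≤ τ₁ := by rw [hτ₁]; linarith
  have hord₂ : τ₁ ≤ τ₂ := by rw [hτ₁, hτ₂]; linarith
  have hord₃ : τ₂ ≤ 2*Real.pi := by
    have h5 : δ ≤ 2*Real.pi - θ₀ := by rw [hδdef]; exact min_le_right _ _
    rw [hτ₂]
    linarith
  have hkey : ∀ s ∈ Icc τ₁ τ₂, g s ≤ w p / 2 := by
    intro s hs
    have hδη : δ ≤ η := by rw [hδdef]; exact min_le_left _ _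
    have hs1 : θ₀ + δ/3 ≤ s := hτ₁ ▸ hs.1
    have hs2 : s ≤ θ₀ + 2*δ/3 := hτ₂ ▸ hs.2
    apply le_of_lt
    apply hgshift
    rw [mem_ball, Real.dist_eq, _root_.abs_of_nonneg (by linarith)]
    linarith
  -- integrability
  have huscvcirc : UpperSemicontinuous (fun s : ℝ => v (circleMap c r s)) := by
    intro s
    exact UpperSemicontinuousAt.comp (huscv _ (hcircM s)) (continuous_circleMap c r).continuousAt
  have hvmeas : Measurable (fun s : ℝ => v (circleMap c r s)) := huscvcirc.measurable
  have hvint : IntervalIntegrable (fun s : ℝ => v (circleMap c r s)) MeasureTheory.volume 0 (2*Real.pi) := by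
    rw [intervalIntegrable_iff_integrableOn_Ioc_of_le h2pi.le]
    apply MeasureTheory.Integrable.mono'
      (MeasureTheory.integrableOn_const (C := Real.pi/4) measure_Ioc_lt_top.ne)
    · exact hvmeas.aestronglyMeasurable
    · apply MeasureTheory.ae_of_all
      intro s
      have h1 := hbd _ (hcircM s)
      rw [Real.norm_eq_abs, abs_le]
      exact ⟨by linarith [h1.1, Real.pi_pos], h1.2.le⟩
  have hhint : IntervalIntegrable (fun s : ℝ => h (circleMap c r s)) MeasureTheory.volume 0 (2*Real.pi) :=
    (hhc.comp (continuous_circleMap c r)).intervalIntegrable _ _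
  have hgint : IntervalIntegrable g MeasureTheory.volume 0 (2*Real.pi) := by
    simp only [hg, hw]
    exact hvint.sub hhint
  -- sub-mean inequality for w
  have hsubw : w c ≤ (2*Real.pi)⁻¹ * ∫ s in (0:ℝ)..(2*Real.pi), g s := by
    have h1 := hsub c r hr (hcb.trans hQM)
    have h2 : (∫ s in (0:ℝ)..(2*Real.pi), g s)
        = (∫ s in (0:ℝ)..(2*Real.pi), v (circleMap c r s))
          - ∫ s in (0:ℝ)..(2*Real.pi), h (circleMap c r s) := by
      simp only [hg, hw]
      exact intervalIntegral.integral_sub hvint hhint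
    have h3 : (∫ s in (0:ℝ)..(2*Real.pi), h (circleMap c r s)) = 2*Real.pi * h c := by
      have := meanval F hF c r hr
      simp only [hFre] at this
      exact this
    rw [h2, h3, mul_sub]
    have h4 : (2*Real.pi)⁻¹ * (2*Real.pi * h c) = h c := by
      field_simp
    rw [h4]
    simp only [hw, sub_le_sub_iff_right]
    exact h1
  -- integral bounds
  have huIcc : uIcc (0:ℝ) (2*Real.pi) = Icc 0 (2*Real.pi) := uIcc_of_le h2pi.le
  have hgint₁ : IntervalIntegrable g MeasureTheory.volume 0 τ₁ := by
    apply hgint.mono_set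
    rw [huIcc, uIcc_of_le hord₁]
    exact Icc_subset_Icc le_rfl (by linarith)
  have hgint₂ : IntervalIntegrable g MeasureTheory.volume τ₁ τ₂ := by
    apply hgint.mono_set
    rw [huIcc, uIcc_of_le hord₂]
    exact Icc_subset_Icc hord₁ hord₃
  have hgint₃ : IntervalIntegrable g MeasureTheory.volume τ₂ (2*Real.pi) := by
    apply hgint.mono_set
    rw [huIcc, uIcc_of_le hord₃]
    exact Icc_subset_Icc (by linarith) le_rfl
  have hsplit : (∫ s in (0:ℝ)..(2*Real.pi), g s)
      = (∫ s in (0:ℝ)..τ₁, g s) + (∫ s in τ₁..τ₂, g s) + (∫ s in τ₂..(2*Real.pi), g s) := by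
    rw [intervalIntegral.integral_add_adjacent_intervals hgint₁ hgint₂,
      intervalIntegral.integral_add_adjacent_intervals (hgint₁.trans hgint₂) hgint₃]
  have hb₁ : (∫ s in (0:ℝ)..τ₁, g s) ≤ (τ₁ - 0) * w c := by
    have := intervalIntegral.integral_mono_on hord₁ hgint₁ (intervalIntegrable_const)
      (fun s _ => hgmax s)
    rwa [intervalIntegral.integral_const, smul_eq_mul] at this
  have hb₂ : (∫ s in τ₁..τ₂, g s) ≤ (τ₂ - τ₁) * (w p / 2) := by
    have := intervalIntegral.integral_mono_on hord₂ hgint₂ (intervalIntegrable_const)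
      hkey
    rwa [intervalIntegral.integral_const, smul_eq_mul] at this
  have hb₃ : (∫ s in τ₂..(2*Real.pi), g s) ≤ (2*Real.pi - τ₂) * w c := by
    have := intervalIntegral.integral_mono_on hord₃ hgint₃ (intervalIntegrable_const)
      (fun s _ => hgmax s)
    rwa [intervalIntegral.integral_const, smul_eq_mul] at this
  have hτdiff : τ₂ - τ₁ = δ/3 := by rw [hτ₁, hτ₂]; ring
  have hwp2 : w p / 2 < 0 := by linarith
  have hτpos : 0 < τ₂ - τ₁ := by rw [hτdiff]; linarith
  have hmul : (τ₂ - τ₁) * (w p / 2) < (τ₂ - τ₁) * w c :=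
    mul_lt_mul_of_pos_left (by linarith) hτpos
  have hring : (τ₁ - 0) * w c + (τ₂ - τ₁) * w c + (2*Real.pi - τ₂) * w c = 2*Real.pi * w c := by
    ring
  have hstrict : (∫ s in (0:ℝ)..(2*Real.pi), g s) < 2*Real.pi * w c := by
    rw [hsplit]
    linarith
  have hfinal : (2*Real.pi)⁻¹ * (∫ s in (0:ℝ)..(2*Real.pi), g s) < w c := by
    have h2pos : (0:ℝ) < (2*Real.pi)⁻¹ := inv_pos.2 h2pi
    have h5 := mul_lt_mul_of_pos_left hstrict h2pos
    have h6 : (2*Real.pi)⁻¹ * (2*Real.pi * w c) = w c := by field_simp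
    linarith
  exact absurd hsubw (not_le.2 hfinal)

lemma cosh_lb (A : ℝ) : (A + 1)/2 ≤ Real.cosh A := by
  rw [Real.cosh_eq]
  have h1 := Real.add_one_le_exp A
  have h2 := Real.exp_pos (-A)
  linarith

lemma strip_le (v : ℂ → ℝ)
    (husc : UpperSemicontinuousOn v {z : ℂ | |z.im| < Real.pi/4})
    (hsub : ∀ c : ℂ, ∀ r : ℝ, 0 < r → closedBall c r ⊆ {z : ℂ | |z.im| < Real.pi/4} →
      v c ≤ (2 * Real.pi)⁻¹ * ∫ θ in (0:ℝ)..(2*Real.pi), v (circleMap c r θ))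
    (hbd : ∀ z ∈ {z : ℂ | |z.im| < Real.pi/4}, 0 ≤ v z ∧ v z < Real.pi/4)
    (hzero : ∀ x : ℝ, ((x:ℂ)) ∈ {z : ℂ | |z.im| < Real.pi/4} → v ((x:ℂ)) = 0) :
    ∀ z : ℂ, |z.im| < Real.pi/4 → v z ≤ |z.im| := by
  have hπ : (0:ℝ) < Real.pi := Real.pi_pos
  intro z hz
  -- Step 1: the bound with parameter b
  have key : ∀ b : ℝ, |z.im| ≤ b → b < Real.pi/4 → 0 < b →
      v z ≤ (Real.pi/4)/b * |z.im| := by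
    intro b hb1 hb2 hb0
    have hcosb : 0 < Real.cos b := by
      apply Real.cos_pos_of_mem_Ioo
      constructor <;> [linarith; linarith]
    have hzcos : 0 < (Complex.cosh z).re := by
      rw [cosh_re']
      apply mul_pos (Real.cosh_pos _)
      apply Real.cos_pos_of_mem_Ioo
      rcases abs_lt.1 hz with ⟨hl, hr⟩
      constructor <;> [linarith; linarith]
    apply le_of_forall_pos_le_add
    intro ε hε
    set ε' : ℝ := ε / (Complex.cosh z).re with hε'def
    have hε' : 0 < ε' := div_pos hε hzcos
    set A : ℝ := |z.re| + ((Real.pi/4) / (ε' * Real.cos b)) * 2 + 1 with hAdef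
    have hApos : 0 < (Real.pi/4) / (ε' * Real.cos b) := by positivity
    have hAre : -A ≤ z.re ∧ z.re ≤ A := by
      constructor
      · rw [hAdef]; linarith [neg_abs_le z.re]
      · rw [hAdef]; linarith [le_abs_self z.re]
    have hA : Real.pi/4 < ε' * Real.cosh A * Real.cos b := by
      have h1 : (Real.pi/4) / (ε' * Real.cos b) < Real.cosh A := by
        have h2 := cosh_lb A
        have h3 : 0 ≤ |z.re| := abs_nonneg _
        rw [hAdef] at h2 ⊢
        linarith
      have h4 : ε' * ((Real.pi/4) / (ε' * Real.cos b)) < ε' * Real.cosh A :=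
        mul_lt_mul_of_pos_left h1 hε'
      have h5 : ε' * ((Real.pi/4) / (ε' * Real.cos b)) * Real.cos b = Real.pi/4 := by
        field_simp
      calc Real.pi/4 = ε' * ((Real.pi/4) / (ε' * Real.cos b)) * Real.cos b := h5.symm
      _ < ε' * Real.cosh A * Real.cos b := mul_lt_mul_of_pos_right h4 hcosb
    have hbπ : b ≤ Real.pi := by linarith
    -- common edge facts
    have hcoshstrip : ∀ p : ℂ, |p.im| ≤ b → Real.cos b ≤ Real.cos p.im := by
      intro p hp
      rw [show Real.cos p.im = Real.cos |p.im| from (Real.cos_abs p.im).symm]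
      exact Real.cos_le_cos_of_nonneg_of_le_pi (abs_nonneg _) hbπ hp
    have hcoshp : ∀ p : ℂ, |p.im| ≤ b → 0 < (Complex.cosh p).re := by
      intro p hp
      rw [cosh_re']
      exact mul_pos (Real.cosh_pos _) (lt_of_lt_of_le hcosb (hcoshstrip p hp))
    have hcoshside : ∀ p : ℂ, |p.im| ≤ b → (p.re = -A ∨ p.re = A) →
        Real.pi/4 < ε' * (Complex.cosh p).re := by
      intro p hp hside
      have h5 : Real.cosh p.re = Real.cosh A := by
        rcases hside with hs|hs
        · rw [hs, Real.cosh_neg]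
        · rw [hs]
      have h6 : ε' * Real.cosh A * Real.cos b ≤ ε' * Real.cosh A * Real.cos p.im :=
        mul_le_mul_of_nonneg_left (hcoshstrip p hp) (by positivity)
      rw [cosh_re', h5]
      calc Real.pi/4 < ε' * Real.cosh A * Real.cos b := hA
      _ ≤ ε' * Real.cosh A * Real.cos p.im := h6
      _ = ε' * (Real.cosh A * Real.cos p.im) := by ring
    have hreal : ∀ p : ℂ, p.im = 0 → v p = 0 := by
      intro p hp
      have h5 : ((p.re:ℝ):ℂ) = p := Complex.ext (by simp) (by simp [hp])
      have h6 : ((p.re:ℝ):ℂ) ∈ {z : ℂ | |z.im| < Real.pi/4} := by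
        simp only [mem_setOf_eq, Complex.ofReal_im, abs_zero]
        linarith
      rw [← h5]
      exact hzero p.re h6
    have hcase : v z < (Real.pi/4)/b * |z.im| + ε' * (Complex.cosh z).re := by
      rcases le_or_gt 0 z.im with him|him
      · -- upper half: a₁ = 0, a₂ = b, α = (π/4)/b
        have := rect_bound v husc hsub hbd ((Real.pi/4)/b) ε' 0 b A
          (by linarith) hb2 ?_ z hAre.1 hAre.2 him (by rwa [_root_.abs_of_nonneg him] at hb1)
        · rwa [_root_.abs_of_nonneg him]
        · intro p h1 h2 h3 h4 hnot
          have habs : |p.im| ≤ b := abs_le.2 ⟨by linarith, h4⟩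
          have hpM : p ∈ {z : ℂ | |z.im| < Real.pi/4} := by
            simp only [mem_setOf_eq]
            exact lt_of_le_of_lt habs hb2
          have hαim : 0 ≤ (Real.pi/4)/b * p.im := mul_nonneg (by positivity) h3
          have hcp := hcoshp p habs
          have hec : p.re = -A ∨ p.re = A ∨ p.im = 0 ∨ p.im = b := by
            by_contra hcon
            push_neg at hcon
            exact hnot ⟨lt_of_le_of_ne h1 (Ne.symm hcon.1), lt_of_le_of_ne h2 hcon.2.1,
              lt_of_le_of_ne h3 (Ne.symm hcon.2.2.1), lt_of_le_of_ne h4 hcon.2.2.2⟩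
          rcases hec with hc|hc|hc|hc
          · have := hcoshside p habs (Or.inl hc)
            have h8 := (hbd p hpM).2
            linarith
          · have := hcoshside p habs (Or.inr hc)
            have h8 := (hbd p hpM).2
            linarith
          · have h9 := hreal p hc
            have h10 : 0 < ε' * (Complex.cosh p).re := by positivity
            rw [h9, hc]
            simp only [mul_zero, zero_add]
            linarith
          · have h8 := (hbd p hpM).2
            have h11 : (Real.pi/4)/b * p.im = Real.pi/4 := by
              rw [hc]
              field_simp
            have h10 : 0 < ε' * (Complex.cosh p).re := by positivity
            linarith
      · -- lower half: a₁ = -b, a₂ = 0, α = -(π/4)/b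
        have := rect_bound v husc hsub hbd (-((Real.pi/4)/b)) ε' (-b) 0 A
          (by linarith) (by linarith) ?_ z hAre.1 hAre.2
          (by rw [_root_.abs_of_neg him] at hb1; linarith) him.le
        · rw [_root_.abs_of_neg him]
          have heq : -((Real.pi/4)/b) * z.im = (Real.pi/4)/b * (-z.im) := by ring
          linarith [heq ▸ this]
        · intro p h1 h2 h3 h4 hnot
          have habs : |p.im| ≤ b := abs_le.2 ⟨h3, by linarith⟩
          have hpM : p ∈ {z : ℂ | |z.im| < Real.pi/4} := by
            simp only [mem_setOf_eq]
            exact lt_of_le_of_lt habs hb2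
          have hαim : 0 ≤ -((Real.pi/4)/b) * p.im := by
            have heq : -((Real.pi/4)/b) * p.im = (Real.pi/4)/b * (-p.im) := by ring
            rw [heq]
            exact mul_nonneg (by positivity) (by linarith)
          have hcp := hcoshp p habs
          have hec : p.re = -A ∨ p.re = A ∨ p.im = -b ∨ p.im = 0 := by
            by_contra hcon
            push_neg at hcon
            exact hnot ⟨lt_of_le_of_ne h1 (Ne.symm hcon.1), lt_of_le_of_ne h2 hcon.2.1,
              lt_of_le_of_ne h3 (Ne.symm hcon.2.2.1), lt_of_le_of_ne h4 hcon.2.2.2⟩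
          rcases hec with hc|hc|hc|hc
          · have := hcoshside p habs (Or.inl hc)
            have h8 := (hbd p hpM).2
            linarith
          · have := hcoshside p habs (Or.inr hc)
            have h8 := (hbd p hpM).2
            linarith
          · have h8 := (hbd p hpM).2
            have h11 : -((Real.pi/4)/b) * p.im = Real.pi/4 := by
              rw [hc]
              field_simp
            have h10 : 0 < ε' * (Complex.cosh p).re := by positivity
            linarith
          · have h9 := hreal p hc
            have h10 : 0 < ε' * (Complex.cosh p).re := by positivity
            rw [h9, hc]
            simp only [mul_zero, neg_zero, zero_add]
            linarith
    have hfin : ε' * (Complex.cosh z).re = ε := by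
      rw [hε'def]
      field_simp
    linarith [hcase, hfin]
  -- Step 2: let b → π/4
  rcases eq_or_lt_of_le (abs_nonneg z.im) with h0|h0
  · have := key (Real.pi/8) (by rw [← h0]; linarith) (by linarith) (by linarith)
    rw [← h0] at this ⊢
    simpa using this
  · apply le_of_forall_pos_le_add
    intro δ hδ
    set t : ℝ := |z.im| with htdef
    set b : ℝ := max t ((Real.pi/4) * t / (t + δ)) with hbdef
    have hbt : t ≤ b := le_max_left _ _
    have hb0 : 0 < b := lt_of_lt_of_le h0 hbt
    have hbfrac : (Real.pi/4) * t / (t + δ) ≤ b := le_max_right _ _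
    have hfrac : (Real.pi/4) * t / (t + δ) < Real.pi/4 := by
      rw [div_lt_iff₀ (by linarith)]
      nlinarith
    have hb2 : b < Real.pi/4 := by
      rw [hbdef]
      exact max_lt hz hfrac
    have h5 := key b hbt hb2 hb0
    have h6 : (Real.pi/4)/b * t ≤ t + δ := by
      rw [div_mul_eq_mul_div, div_le_iff₀ hb0]
      calc Real.pi/4 * t = (t + δ) * ((Real.pi/4) * t / (t + δ)) := by
            field_simp
      _ ≤ (t + δ) * b := by
            apply mul_le_mul_of_nonneg_left hbfrac (by linarith)
    linarith

/-- **Theorem 3.2.** On the strip `M = {|Im z| < π/4}`, the function `u z = |Im z|`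
belongs to `𝒰(ℝ, M)` and is maximal there. -/
theorem strip_abs_im_maximal
    (M : Set ℂ) (hM : M = {z : ℂ | |z.im| < Real.pi / 4}) :
    MemPSHU M (fun z => |z.im|) ∧
      ∀ v : ℂ → ℝ, MemPSHU M v → ∀ z ∈ M, v z ≤ |z.im| := by
  subst hM
  have hπ : (0:ℝ) < Real.pi := Real.pi_pos
  constructor
  · refine ⟨⟨?_, ?_⟩, ?_, ?_⟩
    · exact ((continuous_abs.comp Complex.continuous_im).continuousOn).upperSemicontinuousOn
    · intro c r hr _
      have hdif : Differentiable ℂ (fun w : ℂ => -I * w) :=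
        (differentiable_const _).mul differentiable_id
      have him := meanval (fun w : ℂ => -I * w) hdif c r hr
      have hre : ∀ w : ℂ, ((-I * w)).re = w.im := by
        intro w
        simp [Complex.mul_re]
      simp only [hre] at him
      -- him : ∫ θ in 0..2π, (circleMap c r θ).im = 2π * c.im
      have habs : |∫ θ in (0:ℝ)..(2*Real.pi), (circleMap c r θ).im|
          ≤ ∫ θ in (0:ℝ)..(2*Real.pi), |(circleMap c r θ).im| :=
        intervalIntegral.abs_integral_le_integral_abs (by linarith)
      rw [him] at habs
      have h1 : |2 * Real.pi * c.im| = 2 * Real.pi * |c.im| := by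
        rw [abs_mul, abs_of_pos (by linarith : (0:ℝ) < 2 * Real.pi)]
      rw [h1] at habs
      have h2 : (0:ℝ) < (2 * Real.pi)⁻¹ := by positivity
      calc |c.im| = (2 * Real.pi)⁻¹ * (2 * Real.pi * |c.im|) := by field_simp
      _ ≤ (2 * Real.pi)⁻¹ * ∫ θ in (0:ℝ)..(2*Real.pi), |(circleMap c r θ).im| :=
          mul_le_mul_of_nonneg_left habs h2.le
    · intro z hz
      exact ⟨abs_nonneg _, hz⟩
    · intro x _
      simp
  · intro v hv z hz
    obtain ⟨⟨husc, hsub⟩, hbd, hzero⟩ := hv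
    exact strip_le v husc hsub hbd hzero z hz
end

section
/- Let M = {z ∈ ℂ : |Im z| < π/4}. Then for every x ∈ ℝ and every ξ ∈ ℝ = T_xℝ one has E_{ℝ,M}(x,ξ) = |ξ|. -/
open Metric Filter Complex Set

/-- `E_{u,M}(x, ξ)`: the infimum over all `C¹` curves `γ : (-ε, ε) → M` with
`γ 0 = x` and `γ' 0 = i·ξ` of `limsup_{t→0⁺} u (γ t) / t` (computed in `EReal`). -/
noncomputable def EInf (M : Set ℂ) (u : ℂ → ℝ) (x : ℂ) (ξ : ℝ) : EReal :=
  sInf {L : EReal | ∃ ε : ℝ, 0 < ε ∧ ∃ γ : ℝ → ℂ,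
    ContDiffOn ℝ 1 γ (Set.Ioo (-ε) ε) ∧ (∀ t ∈ Set.Ioo (-ε) ε, γ t ∈ M) ∧
    γ 0 = x ∧ HasDerivAt γ (Complex.I * (ξ : ℂ)) 0 ∧
    L = limsup (fun t : ℝ => ((u (γ t) / t : ℝ) : EReal)) (nhdsWithin 0 (Set.Ioi 0))}

open MeasureTheory

set_option maxHeartbeats 1000000

/-- `E_{ℝ,M}(x, ξ) = sup_{u ∈ 𝒰(ℝ,M)} E_{u,M}(x, ξ)`. -/
noncomputable def ESup (M : Set ℂ) (x : ℂ) (ξ : ℝ) : EReal :=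
  ⨆ u ∈ {u : ℂ → ℝ | MemPSHU M u}, EInf M u x ξ


lemma circleMap_re' (c : ℂ) (r θ : ℝ) : (circleMap c r θ).re = c.re + r * Real.cos θ := by
  simp [circleMap, Complex.exp_ofReal_mul_I_re]

lemma circleMap_im' (c : ℂ) (r θ : ℝ) : (circleMap c r θ).im = c.im + r * Real.sin θ := by
  simp [circleMap, Complex.exp_ofReal_mul_I_im]

lemma integral_circle_im (c : ℂ) (r : ℝ) :
    ∫ θ in (0:ℝ)..(2 * Real.pi), (circleMap c r θ).im = 2 * Real.pi * c.im := by
  simp only [circleMap_im']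
  rw [intervalIntegral.integral_add (g := fun θ => r * Real.sin θ) (intervalIntegrable_const)
    ((continuous_const.mul Real.continuous_sin).intervalIntegrable _ _),
    intervalIntegral.integral_const_mul, integral_sin]
  simp [Real.cos_two_pi]

/-- pointwise upper semicontinuity at every point of `K` (in the ambient sense). -/
def USCAtOn (v : ℂ → ℝ) (K : Set ℂ) : Prop :=
  ∀ z ∈ K, ∀ y : ℝ, v z < y → ∀ᶠ w in nhds z, v w < y

/-- the barrier `b z = (Re z)^2 - (Im z)^2 + π^2/16`. -/
noncomputable def bb (z : ℂ) : ℝ := z.re ^ 2 - z.im ^ 2 + Real.pi ^ 2 / 16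

lemma bb_continuous : Continuous bb := by
  unfold bb; fun_prop

lemma integral_circle_bb (c : ℂ) (r : ℝ) :
    ∫ θ in (0:ℝ)..(2 * Real.pi), bb (circleMap c r θ) = 2 * Real.pi * bb c := by
  have h : ∀ θ : ℝ, bb (circleMap c r θ) =
      bb c + ((2 * c.re * r) * Real.cos θ + (-2 * c.im * r) * Real.sin θ
        + r ^ 2 * (Real.cos θ ^ 2 - Real.sin θ ^ 2)) := by
    intro θ
    simp only [bb, circleMap_re', circleMap_im']
    have := Real.sin_sq_add_cos_sq θ
    ring
  simp only [h]
  have i1 : IntervalIntegrable (fun θ : ℝ => (2 * c.re * r) * Real.cos θ) volume 0 (2*Real.pi) :=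
    (continuous_const.mul Real.continuous_cos).intervalIntegrable _ _
  have i2 : IntervalIntegrable (fun θ : ℝ => (-2 * c.im * r) * Real.sin θ) volume 0 (2*Real.pi) :=
    (continuous_const.mul Real.continuous_sin).intervalIntegrable _ _
  have i3 : IntervalIntegrable (fun θ : ℝ => r ^ 2 * (Real.cos θ ^ 2 - Real.sin θ ^ 2))
      volume 0 (2*Real.pi) := by
    apply Continuous.intervalIntegrable; fun_prop
  rw [intervalIntegral.integral_add intervalIntegrable_const ((i1.add i2).add i3),
    intervalIntegral.integral_add (i1.add i2) i3,
    intervalIntegral.integral_add i1 i2,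
    intervalIntegral.integral_const_mul, intervalIntegral.integral_const_mul,
    intervalIntegral.integral_const_mul, integral_sin, integral_cos,
    integral_cos_sq_sub_sin_sq]
  simp [Real.sin_two_pi, Real.cos_two_pi]

/-- pointwise upper semicontinuity at every point of `K` (in the ambient sense). -/
lemma usc_isClosed_sub {v : ℂ → ℝ} {K : Set ℂ} (hK : IsClosed K) (h : USCAtOn v K) (t : ℝ) :
    IsClosed {z | z ∈ K ∧ t ≤ v z} := by
  rw [← isOpen_compl_iff, isOpen_iff_mem_nhds]
  intro z hz
  simp only [mem_compl_iff, mem_setOf_eq, not_and, not_le] at hz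
  by_cases hzK : z ∈ K
  · filter_upwards [h z hzK t (hz hzK)] with w hw
    simp only [mem_compl_iff, mem_setOf_eq, not_and, not_le]
    exact fun _ => hw
  · filter_upwards [hK.isOpen_compl.mem_nhds hzK] with w hw
    simp only [mem_compl_iff, mem_setOf_eq, not_and, not_le]
    exact fun hwK => absurd hwK hw

lemma usc_exists_max {v : ℂ → ℝ} {K : Set ℂ} (hK : IsCompact K) (hne : K.Nonempty)
    (h : USCAtOn v K) : ∃ c ∈ K, ∀ z ∈ K, v z ≤ v c := by
  obtain ⟨p₀, hp₀⟩ := hne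
  set F : K → Set ℂ := fun p => {z | z ∈ K ∧ v (p : ℂ) ≤ v z} with hF
  have hFcl : ∀ p : K, IsClosed (F p) := fun p => usc_isClosed_sub hK.isClosed h _
  have hFne : ∀ p : K, (F p).Nonempty := fun p => ⟨p, p.2, le_refl _⟩
  have hFcomp : ∀ p : K, IsCompact (F p) := fun p =>
    hK.of_isClosed_subset (hFcl p) (fun z hz => hz.1)
  have hdir : Directed (· ⊇ ·) F := by
    intro p q
    rcases le_total (v p) (v q) with hpq | hpq
    · exact ⟨q, fun z hz => ⟨hz.1, le_trans hpq hz.2⟩, fun z hz => hz⟩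
    · exact ⟨p, fun z hz => hz, fun z hz => ⟨hz.1, le_trans hpq hz.2⟩⟩
  have : Nonempty K := ⟨⟨p₀, hp₀⟩⟩
  obtain ⟨c, hc⟩ := IsCompact.nonempty_iInter_of_directed_nonempty_isCompact_isClosed
    F hdir hFne hFcomp hFcl
  simp only [mem_iInter] at hc
  have hcK : c ∈ K := (hc ⟨p₀, hp₀⟩).1
  exact ⟨c, hcK, fun z hz => (hc ⟨z, hz⟩).2⟩

/-- Maximum principle for sub-mean-value functions. -/
lemma max_principle {v : ℂ → ℝ} {K Ω : Set ℂ} (hK : IsCompact K) (hΩo : IsOpen Ω)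
    (hΩK : Ω ⊆ K) (hne : (K \ Ω).Nonempty)
    (husc : USCAtOn v K)
    (hmean : ∀ c ∈ Ω, ∀ r : ℝ, 0 < r → closedBall c r ⊆ Ω →
      IntervalIntegrable (fun θ => v (circleMap c r θ)) volume 0 (2 * Real.pi) ∧
      v c ≤ (2 * Real.pi)⁻¹ * ∫ θ in (0:ℝ)..(2 * Real.pi), v (circleMap c r θ))
    (hb : ∀ z ∈ K \ Ω, v z ≤ 0) :
    ∀ z ∈ K, v z ≤ 0 := by
  have hKne : K.Nonempty := ⟨hne.choose, hne.choose_spec.1⟩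
  obtain ⟨c₀, hc₀K, hc₀⟩ := usc_exists_max hK hKne husc
  set m := v c₀ with hm
  -- the set of maximizers
  set T : Set ℂ := {z | z ∈ K ∧ m ≤ v z} with hT
  have hTcl : IsClosed T := usc_isClosed_sub hK.isClosed husc m
  have hTcomp : IsCompact T := hK.of_isClosed_subset hTcl (fun z hz => hz.1)
  have hTne : T.Nonempty := ⟨c₀, hc₀K, le_refl _⟩
  obtain ⟨c, hcT, hcmax⟩ := hTcomp.exists_isMaxOn hTne (Complex.continuous_re.continuousOn)
  have hvc : v c = m := le_antisymm (hc₀ c hcT.1) hcT.2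
  -- the maximizer with maximal real part is not in Ω
  have hcΩ : c ∉ Ω := by
    intro hcΩ
    obtain ⟨δ, hδ, hball⟩ := Metric.isOpen_iff.1 hΩo c hcΩ
    set r := δ / 2 with hr
    have hrpos : 0 < r := by positivity
    have hcb : closedBall c r ⊆ Ω := fun z hz =>
      hball (lt_of_le_of_lt (mem_closedBall.1 hz) (by rw [hr]; linarith))
    obtain ⟨hint, hle⟩ := hmean c hcΩ r hrpos hcb
    set g : ℝ → ℝ := fun θ => v (circleMap c r θ) with hg
    have hsphere : ∀ θ, circleMap c r θ ∈ K := by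
      intro θ
      apply hΩK; apply hcb
      have := circleMap_mem_sphere c (le_of_lt hrpos) θ
      exact sphere_subset_closedBall this
    have hgle : ∀ θ, g θ ≤ m := fun θ => hc₀ _ (hsphere θ)
    -- ∫ (m - g) ≤ 0 hence m - g = 0 a.e. on Ioc 0 2π
    have h2π : (0:ℝ) < 2 * Real.pi := by positivity
    have hintm : IntervalIntegrable (fun θ => m - g θ) volume 0 (2 * Real.pi) :=
      intervalIntegrable_const.sub hint
    have hIle : ∫ θ in (0:ℝ)..(2 * Real.pi), (m - g θ) ≤ 0 := by
      rw [intervalIntegral.integral_sub intervalIntegrable_const hint,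
        intervalIntegral.integral_const]
      have : 2 * Real.pi * m ≤ ∫ θ in (0:ℝ)..(2 * Real.pi), g θ := by
        have h1 : m ≤ (2 * Real.pi)⁻¹ * ∫ θ in (0:ℝ)..(2 * Real.pi), g θ := hvc ▸ hle
        calc 2 * Real.pi * m ≤ 2 * Real.pi * ((2 * Real.pi)⁻¹ *
            ∫ θ in (0:ℝ)..(2 * Real.pi), g θ) := by
              exact mul_le_mul_of_nonneg_left h1 (le_of_lt h2π)
          _ = ∫ θ in (0:ℝ)..(2 * Real.pi), g θ := by
              field_simp
      simp only [smul_eq_mul]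
      linarith
    have hae : (fun θ => m - g θ) =ᵐ[volume.restrict (Set.Ioc (0:ℝ) (2*Real.pi))] 0 := by
      have hIoc : IntegrableOn (fun θ => m - g θ) (Set.Ioc (0:ℝ) (2*Real.pi)) volume := by
        rw [← intervalIntegrable_iff_integrableOn_Ioc_of_le (le_of_lt h2π)]
        exact hintm
      have hnn : 0 ≤ᵐ[volume.restrict (Set.Ioc (0:ℝ) (2*Real.pi))] (fun θ => m - g θ) :=
        Filter.Eventually.of_forall (fun θ => by simp [sub_nonneg, hgle θ])
      have hI0 : ∫ θ in Set.Ioc (0:ℝ) (2*Real.pi), (m - g θ) = 0 := by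
        have := intervalIntegral.integral_of_le (μ := volume)
          (f := fun θ => m - g θ) (le_of_lt h2π)
        rw [← this]
        refine le_antisymm hIle ?_
        rw [this]
        exact setIntegral_nonneg_ae measurableSet_Ioc
          (by filter_upwards with θ _; simp [sub_nonneg, hgle θ]) |>.trans_eq rfl
      exact (integral_eq_zero_iff_of_nonneg_ae hnn hIoc).1 hI0
    -- hence g θ = m for θ in a set of full measure in Ioc; conclude v (c + r) = m
    have hg2π : g (2 * Real.pi) = m := by
      by_contra hne'
      have hlt : g (2 * Real.pi) < m := lt_of_le_of_ne (hgle _) hne'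
      have hev : ∀ᶠ θ in nhds (2 * Real.pi), g θ < m := by
        have hcont : ContinuousAt (circleMap c r) (2 * Real.pi) :=
          (continuous_circleMap c r).continuousAt
        have := husc _ (hsphere (2 * Real.pi)) m hlt
        exact hcont.eventually this
      obtain ⟨δ', hδ', hδ'sub⟩ := Metric.eventually_nhds_iff.1 hev
      set l := max (2 * Real.pi - δ') Real.pi with hl
      have hlpos : 0 < l := lt_of_lt_of_le Real.pi_pos (le_max_right _ _)
      have hllt : l < 2 * Real.pi := by
        apply max_lt <;> [linarith; linarith [Real.pi_pos]]
      have hsub : Set.Ioo l (2 * Real.pi) ⊆ {θ | ¬ (m - g θ = 0)} ∩ Set.Ioc (0:ℝ) (2*Real.pi) := by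
        intro θ hθ
        constructor
        · have : g θ < m := by
            apply hδ'sub
            rw [Real.dist_eq, abs_lt]
            constructor
            · have := hθ.1; have := le_max_left (2 * Real.pi - δ') Real.pi; linarith [hθ.1]
            · linarith [hθ.2]
          simp only [mem_setOf_eq]
          intro h'; linarith
        · exact ⟨lt_trans hlpos hθ.1, le_of_lt hθ.2⟩
      have hnull : volume ({θ | ¬ (m - g θ = 0)} ∩ Set.Ioc (0:ℝ) (2*Real.pi)) = 0 := by
        have := hae
        rw [Filter.EventuallyEq, MeasureTheory.ae_iff] at this
        rw [Measure.restrict_apply' measurableSet_Ioc] at this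
        simpa using this
      have hpos : (0:ENNReal) < volume (Set.Ioo l (2 * Real.pi)) := by
        rw [Real.volume_Ioo]
        simp only [ENNReal.ofReal_pos]
        linarith
      have h0 : volume (Set.Ioo l (2 * Real.pi)) = 0 := measure_mono_null hsub hnull
      rw [h0] at hpos
      exact lt_irrefl _ hpos
    -- c + r ∈ T with larger real part: contradiction
    have hcr : circleMap c r (2 * Real.pi) = c + r := by
      simp [circleMap, Complex.exp_two_pi_mul_I]  -- check
    have hcrT : (c + r : ℂ) ∈ T := by
      have h1 : v (c + (r:ℂ)) = m := by rw [← hcr]; exact hg2π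
      exact ⟨hcr ▸ hsphere (2 * Real.pi), le_of_eq h1.symm⟩
    have := hcmax hcrT
    simp only [mem_setOf_eq, Complex.add_re, Complex.ofReal_re] at this
    linarith [hrpos]
  have hc0 : v c ≤ 0 := hb c ⟨hcT.1, hcΩ⟩
  intro z hz
  calc v z ≤ m := hc₀ z hz
    _ = v c := hvc.symm
    _ ≤ 0 := hc0

lemma strip_bound {M : Set ℂ} (hM : M = {z : ℂ | |z.im| < Real.pi / 4}) {u : ℂ → ℝ}
    (hu : MemPSHU M u) : ∀ w ∈ M, u w ≤ |w.im| := by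
  obtain ⟨⟨husc, hsub⟩, hrange, hvan⟩ := hu
  have hπ : (0:ℝ) < Real.pi := Real.pi_pos
  have hMopen : IsOpen M := by
    rw [hM]
    exact isOpen_lt (Complex.continuous_im.abs) continuous_const
  have huA : ∀ ζ ∈ M, ∀ y : ℝ, u ζ < y → ∀ᶠ w' in nhds ζ, u w' < y := by
    intro ζ hζ y hy
    have h := husc ζ hζ y hy
    rwa [nhdsWithin_eq_nhds.2 (hMopen.mem_nhds hζ)] at h
  -- main estimate via the maximum principle
  have main : ∀ σ : ℝ, (σ = 1 ∨ σ = -1) → ∀ l : ℝ, l ∈ Set.Ioo (0:ℝ) 1 → ∀ ε : ℝ, 0 < ε →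
      ∀ z₀ : ℂ, σ * z₀.im ∈ Set.Icc 0 (Real.pi/4) →
      u ((l : ℂ) * z₀) ≤ σ * z₀.im + ε * bb z₀ := by
    intro σ hσ l hl ε hε z₀ hz₀
    have hσ1 : |σ| = 1 := by rcases hσ with h | h <;> simp [h]
    have hσsq : σ * σ = 1 := by rcases hσ with h | h <;> simp [h] <;> norm_num
    have hσ0 : σ ≠ 0 := by rcases hσ with h | h <;> simp [h]
    have hl0 : 0 < l := hl.1
    have hl1 : l < 1 := hl.2
    set A : ℝ := |z₀.re| + Real.sqrt (Real.pi / (4 * ε)) + 1 with hA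
    have hsqrt : Real.sqrt (Real.pi / (4 * ε)) ^ 2 = Real.pi / (4 * ε) :=
      Real.sq_sqrt (by positivity)
    have hA0 : 0 < A := by positivity
    set K : Set ℂ := {z : ℂ | |z.re| ≤ A ∧ σ * z.im ∈ Set.Icc 0 (Real.pi/4)} with hK
    set Ω : Set ℂ := {z : ℂ | |z.re| < A ∧ σ * z.im ∈ Set.Ioo 0 (Real.pi/4)} with hΩ
    set v : ℂ → ℝ := fun z => u ((l:ℂ) * z) - σ * z.im - ε * bb z with hv
    have himK : ∀ z ∈ K, |z.im| ≤ Real.pi / 4 := by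
      intro z hz
      have h1 : |σ * z.im| = |z.im| := by rw [abs_mul, hσ1, one_mul]
      have h2 : |σ * z.im| = σ * z.im := _root_.abs_of_nonneg hz.2.1
      rw [← h1, h2]; exact hz.2.2
    have hlzim : ∀ z : ℂ, ((l:ℂ) * z).im = l * z.im := by
      intro z; simp [Complex.mul_im]
    have hlzM : ∀ z : ℂ, |z.im| ≤ Real.pi / 4 → ((l:ℂ) * z) ∈ M := by
      intro z hz
      rw [hM]; simp only [mem_setOf_eq, hlzim]
      rw [abs_mul, _root_.abs_of_pos hl0]
      calc l * |z.im| ≤ l * (Real.pi / 4) := by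
            exact mul_le_mul_of_nonneg_left hz (le_of_lt hl0)
        _ < 1 * (Real.pi / 4) := by
            apply mul_lt_mul_of_pos_right hl1; positivity
        _ = Real.pi / 4 := one_mul _
    have hKM : ∀ z ∈ K, ((l:ℂ) * z) ∈ M := fun z hz => hlzM z (himK z hz)
    have hKcl : IsClosed K := by
      have : K = {z : ℂ | |z.re| ≤ A} ∩ ((fun z : ℂ => σ * z.im) ⁻¹' Set.Icc 0 (Real.pi/4)) := by
        ext z; simp [hK, Set.mem_Icc]
      rw [this]
      exact (isClosed_le (Complex.continuous_re.abs) continuous_const).inter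
        (IsClosed.preimage (continuous_const.mul Complex.continuous_im) isClosed_Icc)
    have hKcomp : IsCompact K := by
      apply Metric.isCompact_of_isClosed_isBounded hKcl
      apply (Metric.isBounded_closedBall (x := (0:ℂ)) (r := A + Real.pi)).subset
      intro z hz
      simp only [mem_closedBall, Complex.dist_eq, sub_zero]
      calc ‖z‖ ≤ |z.re| + |z.im| := Complex.norm_le_abs_re_add_abs_im z
        _ ≤ A + Real.pi := by
            have := himK z hz
            have := hz.1
            linarith
    have hΩo : IsOpen Ω := by
      have : Ω = {z : ℂ | |z.re| < A} ∩ ((fun z : ℂ => σ * z.im) ⁻¹' Set.Ioo 0 (Real.pi/4)) := by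
        ext z; simp [hΩ, Set.mem_Ioo]
      rw [this]
      exact (isOpen_lt (Complex.continuous_re.abs) continuous_const).inter
        (IsOpen.preimage (continuous_const.mul Complex.continuous_im) isOpen_Ioo)
    have hΩK : Ω ⊆ K := by
      intro z hz
      exact ⟨le_of_lt hz.1, ⟨le_of_lt hz.2.1, le_of_lt hz.2.2⟩⟩
    have hne : (K \ Ω).Nonempty := by
      refine ⟨(A : ℂ), ⟨?_, ?_⟩, ?_⟩
      · simp [_root_.abs_of_pos hA0]
      · simp [Real.pi_nonneg]; positivity
      · simp [hΩ]
    -- upper semicontinuity of v on K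
    have huscv : USCAtOn v K := by
      intro z hz y hy
      set δ := y - v z with hδ
      have hδ0 : 0 < δ := by simp [hδ]; linarith
      have hzM : ((l:ℂ) * z) ∈ M := hKM z hz
      have h1 : ∀ᶠ w in nhds z, u ((l:ℂ) * w) < u ((l:ℂ) * z) + δ/2 := by
        have hev := huA ((l:ℂ)*z) hzM (u ((l:ℂ)*z) + δ/2) (by linarith)
        have hcont : Filter.Tendsto (fun w : ℂ => (l:ℂ) * w) (nhds z) (nhds ((l:ℂ)*z)) :=
          (continuous_const.mul continuous_id).tendsto z
        exact hcont.eventually hev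
      have h2 : ∀ᶠ w in nhds z, -(σ * w.im) - ε * bb w < -(σ * z.im) - ε * bb z + δ/2 := by
        have hcont : Continuous (fun w : ℂ => -(σ * w.im) - ε * bb w) := by
          unfold bb; fun_prop
        exact (hcont.tendsto z).eventually_lt_const (by linarith)
      filter_upwards [h1, h2] with w hw1 hw2
      simp only [hv]
      simp only [hδ, hv] at hw1 hw2 ⊢
      linarith
    -- sub-mean value property of v
    have hmean : ∀ c ∈ Ω, ∀ r : ℝ, 0 < r → closedBall c r ⊆ Ω →
        IntervalIntegrable (fun θ => v (circleMap c r θ)) volume 0 (2 * Real.pi) ∧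
        v c ≤ (2 * Real.pi)⁻¹ * ∫ θ in (0:ℝ)..(2 * Real.pi), v (circleMap c r θ) := by
      intro c hcΩ r hr hcb
      have hcircK : ∀ θ : ℝ, circleMap c r θ ∈ K := by
        intro θ
        apply hΩK; apply hcb
        exact sphere_subset_closedBall (circleMap_mem_sphere c (le_of_lt hr) θ)
      have hcircM : ∀ θ : ℝ, (l:ℂ) * circleMap c r θ ∈ M := fun θ => hKM _ (hcircK θ)
      have hmap : ∀ θ : ℝ, (l:ℂ) * circleMap c r θ = circleMap ((l:ℂ)*c) (l*r) θ := by
        intro θ; simp only [circleMap]; push_cast; ring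
      -- the closed ball around l*c of radius l*r is inside M
      have hcM : closedBall ((l:ℂ)*c) (l*r) ⊆ M := by
        intro ζ hζ
        have h1 : σ * c.im + r < Real.pi / 4 := by
          have hmem : (c + (σ*r : ℝ) * Complex.I) ∈ closedBall c r := by
            rw [mem_closedBall, Complex.dist_eq]
            have heq1 : c + ((σ*r : ℝ) : ℂ) * Complex.I - c = ((σ*r : ℝ) : ℂ) * Complex.I := by
              ring
            rw [heq1, norm_mul, Complex.norm_I, mul_one, Complex.norm_real, Real.norm_eq_abs, abs_mul, hσ1,
              one_mul, _root_.abs_of_pos hr]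
          have := (hcb hmem).2.2
          simp only [Complex.add_im, Complex.mul_im, Complex.ofReal_re, Complex.I_im,
            Complex.ofReal_im, Complex.I_re] at this
          nlinarith [this]
        have h2 : |c.im| = σ * c.im := by
          have := hcΩ.2.1
          have h3 : |σ * c.im| = σ * c.im := _root_.abs_of_pos this
          have h4 : |σ * c.im| = |c.im| := by rw [abs_mul, hσ1, one_mul]
          linarith [h3, h4.symm]
        have h5 : |ζ.im| < Real.pi / 4 := by
          have h6 : |ζ.im - ((l:ℂ)*c).im| ≤ l * r := by
            calc |ζ.im - ((l:ℂ)*c).im| = |(ζ - (l:ℂ)*c).im| := by rw [Complex.sub_im]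
              _ ≤ ‖ζ - (l:ℂ)*c‖ := Complex.abs_im_le_norm _
              _ ≤ l * r := by rw [← Complex.dist_eq]; exact mem_closedBall.1 hζ
          have h7 : |((l:ℂ)*c).im| = l * |c.im| := by
            rw [hlzim, abs_mul, _root_.abs_of_pos hl0]
          calc |ζ.im| ≤ |ζ.im - ((l:ℂ)*c).im| + |((l:ℂ)*c).im| := by
                have := abs_add_le (ζ.im - ((l:ℂ)*c).im) (((l:ℂ)*c).im); simpa using this
            _ ≤ l * r + l * |c.im| := by linarith [h6, h7.le, h7.ge]
            _ = l * (r + |c.im|) := by ring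
            _ < l * (Real.pi / 4) := by
                apply mul_lt_mul_of_pos_left _ hl0
                rw [h2]; linarith
            _ < Real.pi / 4 := by nlinarith
        rw [hM]; exact h5
      have hlr : 0 < l * r := by positivity
      have husub := hsub ((l:ℂ)*c) (l*r) hlr hcM
      -- integrability of the u-part
      have huscθ : UpperSemicontinuous (fun θ : ℝ => u ((l:ℂ) * circleMap c r θ)) := by
        intro θ y hy
        have hev := huA _ (hcircM θ) y hy
        have hcont : Filter.Tendsto (fun θ' : ℝ => (l:ℂ) * circleMap c r θ') (nhds θ)
            (nhds ((l:ℂ) * circleMap c r θ)) :=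
          (continuous_const.mul (continuous_circleMap c r)).tendsto θ
        exact hcont.eventually hev
      have hmeasθ : Measurable (fun θ : ℝ => u ((l:ℂ) * circleMap c r θ)) :=
        huscθ.measurable
      have hbd : ∀ θ : ℝ, ‖u ((l:ℂ) * circleMap c r θ)‖ ≤ Real.pi / 4 := by
        intro θ
        have := hrange _ (hcircM θ)
        rw [Real.norm_eq_abs, _root_.abs_of_nonneg this.1]
        exact le_of_lt this.2
      have hintu : IntervalIntegrable (fun θ : ℝ => u ((l:ℂ) * circleMap c r θ))
          volume 0 (2 * Real.pi) := by
        rw [intervalIntegrable_iff]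
        apply MeasureTheory.Integrable.mono' (g := fun _ => Real.pi / 4)
        · refine integrableOn_const ?_
          rw [Set.uIoc_of_le (by positivity : (0:ℝ) ≤ 2*Real.pi), Real.volume_Ioc]
          exact ENNReal.ofReal_ne_top
        · exact hmeasθ.aestronglyMeasurable.restrict
        · exact Filter.Eventually.of_forall (fun θ => hbd θ)
      have hintim : IntervalIntegrable (fun θ : ℝ => σ * (circleMap c r θ).im)
          volume 0 (2 * Real.pi) := by
        apply Continuous.intervalIntegrable
        exact continuous_const.mul (Complex.continuous_im.comp (continuous_circleMap c r))
      have hintbb : IntervalIntegrable (fun θ : ℝ => ε * bb (circleMap c r θ))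
          volume 0 (2 * Real.pi) := by
        apply Continuous.intervalIntegrable
        apply continuous_const.mul
        unfold bb
        fun_prop
      have hintv : IntervalIntegrable (fun θ => v (circleMap c r θ)) volume 0 (2 * Real.pi) := by
        have : (fun θ => v (circleMap c r θ)) = fun θ =>
            (u ((l:ℂ) * circleMap c r θ) - σ * (circleMap c r θ).im
              - ε * bb (circleMap c r θ)) := rfl
        rw [this]
        exact (hintu.sub hintim).sub hintbb
      refine ⟨hintv, ?_⟩
      have heq : ∫ θ in (0:ℝ)..(2 * Real.pi), v (circleMap c r θ) =
          (∫ θ in (0:ℝ)..(2 * Real.pi), u ((l:ℂ) * circleMap c r θ))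
          - σ * (2 * Real.pi * c.im) - ε * (2 * Real.pi * bb c) := by
        have h1 : ∫ θ in (0:ℝ)..(2 * Real.pi), v (circleMap c r θ) =
            (∫ θ in (0:ℝ)..(2 * Real.pi), u ((l:ℂ) * circleMap c r θ))
            - (∫ θ in (0:ℝ)..(2 * Real.pi), σ * (circleMap c r θ).im)
            - (∫ θ in (0:ℝ)..(2 * Real.pi), ε * bb (circleMap c r θ)) := by
          rw [← intervalIntegral.integral_sub hintu hintim,
            ← intervalIntegral.integral_sub (hintu.sub hintim) hintbb]
        rw [h1, intervalIntegral.integral_const_mul, intervalIntegral.integral_const_mul,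
          integral_circle_im, integral_circle_bb]
      rw [heq]
      have h2 : u ((l:ℂ)*c) ≤ (2 * Real.pi)⁻¹ *
          ∫ θ in (0:ℝ)..(2 * Real.pi), u ((l:ℂ) * circleMap c r θ) := by
        have : (fun θ : ℝ => u ((l:ℂ) * circleMap c r θ))
            = fun θ => u (circleMap ((l:ℂ)*c) (l*r) θ) := by
          funext θ; rw [hmap θ]
        rw [this]
        exact husub
      simp only [hv]
      have h2π : (0:ℝ) < 2 * Real.pi := by positivity
      have hexp : (2 * Real.pi)⁻¹ * ((∫ θ in (0:ℝ)..(2 * Real.pi), u ((l:ℂ) * circleMap c r θ))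
          - σ * (2 * Real.pi * c.im) - ε * (2 * Real.pi * bb c))
          = (2 * Real.pi)⁻¹ * (∫ θ in (0:ℝ)..(2 * Real.pi), u ((l:ℂ) * circleMap c r θ))
            - σ * c.im - ε * bb c := by
        field_simp
      rw [hexp]
      linarith [h2]
    -- boundary bound
    have hbv : ∀ z ∈ K \ Ω, v z ≤ 0 := by
      rintro z ⟨hzK, hzΩ⟩
      have hzim := himK z hzK
      have hzre := hzK.1
      have hzicc := hzK.2
      have hbbz : z.re ^ 2 - z.im ^ 2 + Real.pi ^ 2 / 16 = bb z := rfl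
      have him2 : z.im ^ 2 ≤ Real.pi ^ 2 / 16 := by
        nlinarith [hzim, _root_.abs_nonneg z.im, _root_.sq_abs z.im]
      simp only [hΩ, mem_setOf_eq, not_and, not_lt] at hzΩ
      by_cases hre : |z.re| < A
      · -- then σ z.im ∈ {0, π/4}
        have h3 := hzΩ hre
        rw [Set.mem_Ioo, not_and_or, not_lt, not_lt] at h3
        rcases h3 with h4 | h4
        · -- σ z.im ≤ 0, so = 0, so z.im = 0 and z real
          have h5 : σ * z.im = 0 := le_antisymm h4 hzicc.1
          have h6 : z.im = 0 := by
            rcases mul_eq_zero.1 h5 with h | h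
            · exact absurd h hσ0
            · exact h
          have h7 : ((l:ℂ) * z) = ((l * z.re : ℝ) : ℂ) := by
            apply Complex.ext <;> simp [Complex.mul_im, Complex.mul_re, h6]
          have h8 : u ((l:ℂ) * z) = 0 := by
            rw [h7]
            apply hvan
            rw [hM]; simp only [mem_setOf_eq, Complex.ofReal_im, abs_zero]; positivity
          simp only [hv, h8, h5]
          have : 0 ≤ bb z := by
            rw [← hbbz, h6]
            nlinarith [sq_nonneg z.re, sq_nonneg Real.pi]
          nlinarith [this, hε, h5]
        · -- σ z.im = π/4
          have h5 : σ * z.im = Real.pi / 4 := le_antisymm hzicc.2 h4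
          have h9 : z.im ^ 2 = Real.pi ^ 2 / 16 := by
            have : (σ * z.im) ^ 2 = (Real.pi / 4) ^ 2 := by rw [h5]
            have hexp : (σ * z.im)^2 = (σ*σ) * z.im^2 := by ring
            rw [hexp, hσsq, one_mul] at this
            rw [this]; ring
          have h10 : u ((l:ℂ)*z) < Real.pi / 4 := (hrange _ (hKM z hzK)).2
          have h11 : bb z = z.re ^ 2 := by rw [← hbbz, h9]; ring
          simp only [hv, h5, h11]
          nlinarith [h10, hε, sq_nonneg z.re]
      · -- side edge: |z.re| = A
        push_neg at hre
        have h5 : z.re ^ 2 = A ^ 2 := by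
          have : |z.re| = A := le_antisymm hzre hre
          rw [← this, _root_.sq_abs]
        have h6 : Real.pi / (4 * ε) ≤ A ^ 2 := by
          rw [← hsqrt]
          apply sq_le_sq'
          · have := Real.sqrt_nonneg (Real.pi / (4*ε)); linarith [abs_nonneg z₀.re]
          · have := abs_nonneg z₀.re; simp [hA]; linarith [Real.sqrt_nonneg (Real.pi / (4*ε))]
        have h10 : u ((l:ℂ)*z) < Real.pi / 4 := (hrange _ (hKM z hzK)).2
        have h12 : bb z ≥ Real.pi / (4 * ε) := by
          rw [← hbbz, h5]
          nlinarith [h6, him2]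
        simp only [hv]
        have h13 : ε * bb z ≥ Real.pi / 4 := by
          calc ε * bb z ≥ ε * (Real.pi / (4 * ε)) := by
                exact mul_le_mul_of_nonneg_left h12 (le_of_lt hε)
            _ = Real.pi / 4 := by field_simp
        nlinarith [h10, hzicc.1, h13]
    -- conclude
    have hz₀K : z₀ ∈ K := by
      refine ⟨?_, hz₀⟩
      simp only [hA]
      linarith [Real.sqrt_nonneg (Real.pi / (4*ε))]
    have := max_principle hKcomp hΩo hΩK hne huscv hmean hbv z₀ hz₀K
    simp only [hv] at this
    linarith
  -- remove ε
  have main2 : ∀ σ : ℝ, (σ = 1 ∨ σ = -1) → ∀ l : ℝ, l ∈ Set.Ioo (0:ℝ) 1 →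
      ∀ z₀ : ℂ, σ * z₀.im ∈ Set.Icc 0 (Real.pi/4) →
      u ((l : ℂ) * z₀) ≤ σ * z₀.im := by
    intro σ hσ l hl z₀ hz₀
    by_contra hcon
    push_neg at hcon
    have him1 : z₀.im ^ 2 ≤ Real.pi ^ 2 / 16 := by
      have h2 : |σ * z₀.im| = |z₀.im| := by
        rcases hσ with h | h <;> simp [h]
      have h3 : |σ * z₀.im| ≤ Real.pi / 4 := by
        rw [_root_.abs_of_nonneg hz₀.1]; exact hz₀.2
      nlinarith [_root_.abs_nonneg z₀.im, _root_.sq_abs z₀.im, h2 ▸ h3]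
    have hbb0 : 0 ≤ bb z₀ := by
      unfold bb; nlinarith [sq_nonneg z₀.re]
    set d := u ((l : ℂ) * z₀) - σ * z₀.im with hd
    have hd0 : 0 < d := by simp only [hd]; linarith
    have hbb1 : (0:ℝ) < 2 * (bb z₀ + 1) := by linarith
    set ε := d / (2 * (bb z₀ + 1)) with hεdef
    have hε : 0 < ε := div_pos hd0 hbb1
    have hmain := main σ hσ l hl ε hε z₀ hz₀
    have h5 : ε * bb z₀ ≤ d / 2 := by
      rw [hεdef, div_mul_eq_mul_div, div_le_div_iff₀ hbb1 (by norm_num : (0:ℝ) < 2)]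
      nlinarith [hbb0, hd0]
    have h6 : d ≤ d / 2 := by
      simp only [hd] at *
      linarith [hmain, h5]
    linarith
  -- remove l and choose σ: final statement
  intro w hw
  have hwim : |w.im| < Real.pi / 4 := by rw [hM] at hw; exact hw
  set σ : ℝ := if 0 ≤ w.im then 1 else -1 with hσdef
  have hσ : σ = 1 ∨ σ = -1 := by by_cases h : 0 ≤ w.im <;> simp [hσdef, h]
  have hσw : σ * w.im = |w.im| := by
    by_cases h : 0 ≤ w.im
    · simp [hσdef, h, _root_.abs_of_nonneg h]
    · push_neg at h; simp [hσdef, not_le.2 h, _root_.abs_of_neg h]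
  by_contra hcon
  push_neg at hcon
  set β := |w.im| with hβ
  set α := u w with hα
  have hβ0 : 0 ≤ β := abs_nonneg _
  have hβα : β < α := hcon
  have hα0 : 0 < α := lt_of_le_of_lt hβ0 hβα
  set m0 : ℝ := max (4 * β / Real.pi) (β / α) with hm0
  have hm01 : m0 < 1 := by
    apply max_lt
    · rw [div_lt_one hπ]; linarith [hwim]
    · rw [div_lt_one hα0]; exact hβα
  have hm00 : 0 ≤ m0 := le_trans (by positivity) (le_max_left _ _)
  set l := (m0 + 1) / 2 with hldef
  have hl : l ∈ Set.Ioo (0:ℝ) 1 := by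
    constructor
    · simp only [hldef]; linarith
    · simp only [hldef]; linarith
  have hlm0 : m0 < l := by simp only [hldef]; linarith
  set z₀ := ((l : ℂ))⁻¹ * w with hz₀def
  have hl0' : (l:ℂ) ≠ 0 := by
    simp only [ne_eq, Complex.ofReal_eq_zero]
    linarith [hl.1]
  have hlz₀ : (l : ℂ) * z₀ = w := by
    rw [hz₀def]; field_simp
  have hz₀im : z₀.im = w.im / l := by
    rw [hz₀def]
    have : ((l : ℂ))⁻¹ = ((l⁻¹ : ℝ) : ℂ) := by push_cast; ring
    rw [this]
    simp [Complex.mul_im]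
    ring
  have hz₀cc : σ * z₀.im ∈ Set.Icc 0 (Real.pi/4) := by
    rw [hz₀im, ← mul_div_assoc, hσw]
    constructor
    · exact div_nonneg hβ0 (le_of_lt hl.1)
    · rw [div_le_iff₀ hl.1]
      have h1 : 4 * β / Real.pi ≤ m0 := le_max_left _ _
      have h2 : 4 * β / Real.pi < l := lt_of_le_of_lt h1 hlm0
      rw [div_lt_iff₀ hπ] at h2
      nlinarith [hl.1, hπ]
  have hfin := main2 σ hσ l hl z₀ hz₀cc
  rw [hlz₀] at hfin
  have h1 : β / α ≤ m0 := le_max_right _ _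
  have h2 : β / α < l := lt_of_le_of_lt h1 hlm0
  rw [div_lt_iff₀ hα0] at h2
  have h4 : σ * z₀.im < α := by
    rw [hz₀im, ← mul_div_assoc, hσw, div_lt_iff₀ hl.1]
    linarith
  simp only [← hα] at hfin
  linarith

/-- `|Im z|` belongs to the class. -/
lemma absim_mem {M : Set ℂ} (hM : M = {z : ℂ | |z.im| < Real.pi / 4}) :
    MemPSHU M (fun z => |z.im|) := by
  have hπ : (0:ℝ) < Real.pi := Real.pi_pos
  refine ⟨⟨?_, ?_⟩, ?_, ?_⟩
  · exact (Complex.continuous_im.abs).upperSemicontinuous.upperSemicontinuousOn M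
  · intro c r hr hsub
    show |c.im| ≤ (2 * Real.pi)⁻¹ * ∫ θ in (0:ℝ)..(2 * Real.pi), |(circleMap c r θ).im|
    have h2π : (0:ℝ) < 2 * Real.pi := by positivity
    have h1 : |c.im| = (2 * Real.pi)⁻¹ * |∫ θ in (0:ℝ)..(2 * Real.pi), (circleMap c r θ).im| := by
      rw [integral_circle_im, abs_mul, _root_.abs_of_pos h2π]
      field_simp
    rw [h1]
    apply mul_le_mul_of_nonneg_left _ (by positivity)
    have := intervalIntegral.norm_integral_le_integral_norm
      (f := fun θ => (circleMap c r θ).im) (μ := volume) (a := (0:ℝ)) (b := 2 * Real.pi)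
      (le_of_lt h2π)
    simpa [Real.norm_eq_abs] using this
  · intro z hz
    refine ⟨_root_.abs_nonneg _, ?_⟩
    rw [hM] at hz; exact hz
  · intro x hx; simp

lemma einf_lower {M : Set ℂ} (x ξ : ℝ) :
    ((|ξ| : ℝ) : EReal) ≤ EInf M (fun z => |z.im|) (x : ℂ) ξ := by
  apply le_sInf
  rintro L ⟨ε, hε, γ, hγC, hγM, hγ0, hγd, hL⟩
  have h1 : Tendsto (slope γ 0) (nhdsWithin 0 {(0:ℝ)}ᶜ) (nhds (Complex.I * ξ)) :=
    hasDerivAt_iff_tendsto_slope.1 hγd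
  have h2 : Tendsto (slope γ 0) (nhdsWithin 0 (Set.Ioi 0)) (nhds (Complex.I * ξ)) :=
    h1.mono_left (nhdsWithin_mono 0 (fun t ht => ne_of_gt ht))
  have h3 : Tendsto (fun t => (slope γ 0 t).im) (nhdsWithin 0 (Set.Ioi 0)) (nhds ξ) := by
    have := (Complex.continuous_im.tendsto (Complex.I * (ξ:ℂ))).comp h2
    rw [show (Complex.I * (ξ:ℂ)).im = ξ by simp] at this
    exact this
  have h4 : Tendsto (fun t => |(slope γ 0 t).im|) (nhdsWithin 0 (Set.Ioi 0)) (nhds |ξ|) :=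
    h3.abs
  have h5 : ∀ᶠ t in nhdsWithin 0 (Set.Ioi 0), |(slope γ 0 t).im| = |(γ t).im| / t := by
    filter_upwards [self_mem_nhdsWithin] with t ht
    have ht0 : (0:ℝ) < t := ht
    have : slope γ 0 t = (t - 0)⁻¹ • (γ t - γ 0) := rfl
    rw [this, hγ0]
    simp only [Complex.smul_im, sub_zero, Complex.sub_im, Complex.ofReal_im, smul_eq_mul]
    rw [abs_mul, abs_inv, _root_.abs_of_pos ht0]
    ring
  have h6 : Tendsto (fun t => |(γ t).im| / t) (nhdsWithin 0 (Set.Ioi 0)) (nhds |ξ|) :=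
    h4.congr' h5
  have h7 : Tendsto (fun t : ℝ => ((|(γ t).im| / t : ℝ) : EReal)) (nhdsWithin 0 (Set.Ioi 0))
      (nhds ((|ξ| : ℝ) : EReal)) :=
    (continuous_coe_real_ereal.tendsto _).comp h6
  rw [hL, h7.limsup_eq]

lemma einf_upper {M : Set ℂ} (hM : M = {z : ℂ | |z.im| < Real.pi / 4}) {u : ℂ → ℝ}
    (hu : MemPSHU M u) (x ξ : ℝ) :
    EInf M u (x : ℂ) ξ ≤ ((|ξ| : ℝ) : EReal) := by
  have hπ : (0:ℝ) < Real.pi := Real.pi_pos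
  set ε := (Real.pi / 4) / (|ξ| + 1) with hε
  have hε0 : 0 < ε := by positivity
  set γ : ℝ → ℂ := fun t => (x : ℂ) + (t : ℂ) * (Complex.I * ξ) with hγ
  have him : ∀ t : ℝ, (γ t).im = t * ξ := by
    intro t
    simp [hγ, Complex.add_im, Complex.mul_im]
  have hmem : ∀ t : ℝ, |t| < ε → γ t ∈ M := by
    intro t ht
    rw [hM]
    simp only [mem_setOf_eq, him]
    calc |t * ξ| = |t| * |ξ| := abs_mul t ξ
      _ ≤ |t| * (|ξ| + 1) := by
          apply mul_le_mul_of_nonneg_left _ (_root_.abs_nonneg t)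
          linarith [_root_.abs_nonneg ξ]
      _ < ε * (|ξ| + 1) := by
          apply mul_lt_mul_of_pos_right ht
          linarith [_root_.abs_nonneg ξ]
      _ = Real.pi / 4 := by
          rw [hε]
          have h9 : |ξ| + 1 ≠ 0 := by positivity
          field_simp
  have hL : EInf M u (x : ℂ) ξ ≤
      limsup (fun t : ℝ => ((u (γ t) / t : ℝ) : EReal)) (nhdsWithin 0 (Set.Ioi 0)) := by
    apply sInf_le
    refine ⟨ε, hε0, γ, ?_, ?_, ?_, ?_, rfl⟩
    · apply ContDiff.contDiffOn
      exact contDiff_const.add (Complex.ofRealCLM.contDiff.mul contDiff_const)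
    · intro t ht
      apply hmem
      rw [abs_lt]; exact ⟨ht.1, ht.2⟩
    · simp [hγ]
    · have h1 : HasDerivAt (fun t : ℝ => ((t : ℂ))) 1 0 := by
        simpa using (hasDerivAt_id (0:ℝ)).ofReal_comp
      have h2 := (h1.mul_const (Complex.I * ξ)).const_add (x : ℂ)
      rw [one_mul] at h2; exact h2
  refine le_trans hL ?_
  refine Filter.limsup_le_of_le (by isBoundedDefault) ?_
  have hev1 : ∀ᶠ t in nhdsWithin 0 (Set.Ioi 0), t < ε :=
    Filter.Eventually.filter_mono nhdsWithin_le_nhds (Iio_mem_nhds hε0)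
  filter_upwards [self_mem_nhdsWithin, hev1] with t ht htε
  have ht0 : (0:ℝ) < t := ht
  have hmemt : γ t ∈ M := hmem t (by rw [_root_.abs_of_pos ht0]; exact htε)
  have hb := strip_bound hM hu (γ t) hmemt
  rw [him t] at hb
  have h8 : u (γ t) / t ≤ |ξ| := by
    rw [div_le_iff₀ ht0]
    calc u (γ t) ≤ |t * ξ| := hb
      _ = t * |ξ| := by rw [abs_mul, _root_.abs_of_pos ht0]
      _ = |ξ| * t := by ring
  exact_mod_cast EReal.coe_le_coe_iff.2 h8

/-- **Theorem 3.2** (metric part).  For the strip `M = {|Im z| < π/4}` one has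
`E_{ℝ,M}(x, ξ) = |ξ|` for every `x ∈ ℝ` and `ξ ∈ ℝ = T_xℝ`. -/
theorem strip_E_metric
    (M : Set ℂ) (hM : M = {z : ℂ | |z.im| < Real.pi / 4}) (x ξ : ℝ) :
    ESup M (x : ℂ) ξ = ((|ξ| : ℝ) : EReal) := by
  apply le_antisymm
  · apply iSup₂_le
    intro u hu
    exact einf_upper hM hu x ξ
  · calc ((|ξ| : ℝ) : EReal) ≤ EInf M (fun z => |z.im|) (x : ℂ) ξ := einf_lower x ξ
      _ ≤ ESup M (x : ℂ) ξ := by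
          apply le_iSup₂ (f := fun u (_ : u ∈ {u : ℂ → ℝ | MemPSHU M u}) => EInf M u (x : ℂ) ξ)
            (fun z => |z.im|) (absim_mem hM)
end
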